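/- arXiv:1902.09078 — 15 statements merged into one kernel-verified Lean document; each statement's English description precedes it below -/
import Mathlib

section
/- Let P be a primitive (ergodic) stochastic matrix on a finite nonempty state space X with stationary distribution π, and let Π be the square matrix each of whose rows equals π. Then the matrix I − P + Π is invertible (so the fundamental matrix F := (I − P + Π)⁻¹ exists). -/
open Matrix BigOperators Finset

theorem stmt_0
    {X : Type*} [Fintype X] [Nonempty X] [DecidableEq X]
    (P : Matrix X X ℝ)
    (hP_nonneg : ∀ i j, 0 ≤ P i j)
    (hP_row : ∀ i, ∑ j, P i j = 1)
    (hP_prim : ∃ N : ℕ, 1 ≤ N ∧ ∀ i j, 0 < (P ^ N) i j)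
    (pi : X → ℝ)
    (hpi_pos : ∀ i, 0 < pi i)
    (hpi_sum : ∑ i, pi i = 1)
    (hpi_stat : ∀ j, ∑ i, pi i * P i j = pi j)
    (PiM : Matrix X X ℝ)
    (hPiM : ∀ i j, PiM i j = pi j)
    : IsUnit (1 - P + PiM) := by
  -- powers of P are stochastic
  have key : ∀ n : ℕ, (∀ i j, 0 ≤ (P ^ n) i j) ∧ (∀ i, ∑ j, (P ^ n) i j = 1) := by
    intro n
    induction n with
    | zero =>
      constructor
      · intro i j
        simp only [pow_zero, Matrix.one_apply]
        split <;> norm_num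
      · intro i
        simp [pow_zero, Matrix.one_apply]
    | succ n ih =>
      constructor
      · intro i j
        rw [pow_succ, Matrix.mul_apply]
        exact Finset.sum_nonneg fun k _ => mul_nonneg (ih.1 i k) (hP_nonneg k j)
      · intro i
        simp only [pow_succ, Matrix.mul_apply]
        rw [Finset.sum_comm]
        calc ∑ k, ∑ j, (P ^ n) i k * P k j
            = ∑ k, (P ^ n) i k * ∑ j, P k j := by
              simp [Finset.mul_sum]
          _ = 1 := by simp [hP_row, ih.2 i]
  rw [Matrix.isUnit_iff_isUnit_det, isUnit_iff_ne_zero]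
  intro hdet
  obtain ⟨v, hv0, hv⟩ := Matrix.exists_mulVec_eq_zero_iff.2 hdet
  set c : ℝ := ∑ j, pi j * v j with hc
  have hPiv : ∀ i, (PiM.mulVec v) i = c := by
    intro i
    simp [Matrix.mulVec, dotProduct, hPiM, hc]
  have hEq : ∀ i, v i - (P.mulVec v) i + c = 0 := by
    intro i
    have := congrFun hv i
    simpa [Matrix.add_mulVec, Matrix.sub_mulVec, Matrix.one_mulVec, hPiv i,
      Pi.add_apply, Pi.sub_apply] using this
  -- π · (Pv) = c
  have hPvc : ∑ i, pi i * (P.mulVec v) i = c := by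
    calc ∑ i, pi i * (P.mulVec v) i
        = ∑ i, ∑ j, pi i * (P i j * v j) := by
          simp [Matrix.mulVec, dotProduct, Finset.mul_sum]
      _ = ∑ j, (∑ i, pi i * P i j) * v j := by
          rw [Finset.sum_comm]
          simp [Finset.sum_mul, mul_assoc]
      _ = c := by simp [hpi_stat, hc]
  -- c = 0
  have hc0 : c = 0 := by
    have h0 : ∑ i, pi i * (v i - (P.mulVec v) i + c) = 0 := by
      apply Finset.sum_eq_zero
      intro i _
      rw [hEq i, mul_zero]
    have hexp : ∑ i, pi i * (v i - (P.mulVec v) i + c)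
        = c - c + c := by
      simp only [mul_sub, mul_add]
      rw [Finset.sum_add_distrib, Finset.sum_sub_distrib, ← Finset.sum_mul, hpi_sum, hPvc, hc]
      ring
    rw [hexp] at h0
    linarith
  -- v is P-invariant
  have hfix : P.mulVec v = v := by
    funext i
    have := hEq i
    rw [hc0] at this
    linarith
  have hpow : ∀ n : ℕ, (P ^ n).mulVec v = v := by
    intro n
    induction n with
    | zero => simp [Matrix.one_mulVec]
    | succ n ih =>
      rw [pow_succ', ← Matrix.mulVec_mulVec, ih, hfix]
  obtain ⟨N, hN1, hNpos⟩ := hP_prim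
  obtain ⟨i0, hi0⟩ := Finite.exists_max v
  have hsum : ∑ j, (P ^ N) i0 j * v j = v i0 := by
    have := congrFun (hpow N) i0
    simpa [Matrix.mulVec, dotProduct] using this
  have hsum' : ∑ j, (P ^ N) i0 j * v i0 = v i0 := by
    rw [← Finset.sum_mul, (key N).2 i0, one_mul]
  have hall : ∀ j, v j = v i0 := by
    have heq := (Finset.sum_eq_sum_iff_of_le
      (fun j _ => mul_le_mul_of_nonneg_left (hi0 j) ((key N).1 i0 j))).1
      (hsum.trans hsum'.symm)
    intro j
    have := heq j (Finset.mem_univ j)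
    exact mul_left_cancel₀ (ne_of_gt (hNpos i0 j)) this
  have hcv : c = v i0 := by
    rw [hc]
    calc ∑ j, pi j * v j = ∑ j, pi j * v i0 := by
          exact Finset.sum_congr rfl fun j _ => by rw [hall j]
      _ = v i0 := by rw [← Finset.sum_mul, hpi_sum, one_mul]
  apply hv0
  funext j
  rw [hall j, ← hcv, hc0]
  rfl
end

section
/- Let P be a primitive stochastic matrix on a finite nonempty state space X with stationary distribution π, Π the matrix each of whose rows equals π, and F the fundamental matrix, i.e. F(I − P + Π) = (I − P + Π)F = I. Then F − Π is the group inverse of I − P; that is, (I − P)(F − Π)(I − P) = I − P, (F − Π)(I − P)(F − Π) = F − Π, and (I − P)(F − Π) = (F − Π)(I − P). -/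
open Matrix BigOperators Finset

theorem stmt_1
    {X : Type*} [Fintype X] [Nonempty X] [DecidableEq X]
    (P : Matrix X X ℝ)
    (hP_nonneg : ∀ i j, 0 ≤ P i j)
    (hP_row : ∀ i, ∑ j, P i j = 1)
    (hP_prim : ∃ N : ℕ, 1 ≤ N ∧ ∀ i j, 0 < (P ^ N) i j)
    (pi : X → ℝ)
    (hpi_pos : ∀ i, 0 < pi i)
    (hpi_sum : ∑ i, pi i = 1)
    (hpi_stat : ∀ j, ∑ i, pi i * P i j = pi j)
    (PiM : Matrix X X ℝ)
    (hPiM : ∀ i j, PiM i j = pi j)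
    (F : Matrix X X ℝ)
    (hF1 : F * (1 - P + PiM) = 1)
    (hF2 : (1 - P + PiM) * F = 1)
    : (1 - P) * (F - PiM) * (1 - P) = 1 - P ∧
      (F - PiM) * (1 - P) * (F - PiM) = F - PiM ∧
      (1 - P) * (F - PiM) = (F - PiM) * (1 - P) := by
  have hPPi : P * PiM = PiM := by
    ext i j
    simp only [Matrix.mul_apply, hPiM]
    rw [← Finset.sum_mul, hP_row, one_mul]
  have hPiP : PiM * P = PiM := by
    ext i j
    simp only [Matrix.mul_apply, hPiM]
    exact hpi_stat j
  have hPiPi : PiM * PiM = PiM := by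
    ext i j
    simp only [Matrix.mul_apply, hPiM]
    rw [← Finset.sum_mul, hpi_sum, one_mul]
  have hPiS : PiM * (1 - P + PiM) = PiM := by
    rw [mul_add, mul_sub, mul_one, hPiP, hPiPi]; abel
  have hSPi : (1 - P + PiM) * PiM = PiM := by
    rw [add_mul, sub_mul, one_mul, hPPi, hPiPi]; abel
  have hPiF : PiM * F = PiM := by
    calc PiM * F = (PiM * (1 - P + PiM)) * F := by rw [hPiS]
    _ = PiM * ((1 - P + PiM) * F) := by rw [mul_assoc]
    _ = PiM := by rw [hF2, mul_one]
  have hFPi : F * PiM = PiM := by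
    calc F * PiM = F * ((1 - P + PiM) * PiM) := by rw [hSPi]
    _ = (F * (1 - P + PiM)) * PiM := by rw [mul_assoc]
    _ = PiM := by rw [hF1, one_mul]
  have hAB : (1 - P) * (F - PiM) = 1 - PiM := by
    have h : (1 - P) * F = 1 - PiM := by
      have := hF2
      rw [add_mul] at this
      rw [← hPiF]; linear_combination (norm := noncomm_ring) this
    rw [mul_sub, h, sub_mul, one_mul, hPPi]; abel
  have hBA : (F - PiM) * (1 - P) = 1 - PiM := by
    have h : F * (1 - P) = 1 - PiM := by
      have := hF1
      rw [mul_add] at this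
      rw [← hFPi]; linear_combination (norm := noncomm_ring) this
    rw [sub_mul, h, mul_sub, mul_one, hPiP]; abel
  refine ⟨?_, ?_, hAB.trans hBA.symm⟩
  · rw [hAB, sub_mul, one_mul, mul_sub, mul_one, hPiP]; abel
  · rw [hBA, sub_mul, one_mul, mul_sub, hPiF, hPiPi]; abel
end

section
/- Let P be a primitive stochastic matrix on a finite nonempty state space X with stationary distribution π, Π the matrix each of whose rows equals π, F the fundamental matrix, and h the mean hitting times of the chain. Then for all states i, j one has π_j · h(i,j) = F_{j,j} − F_{i,j}. -/
open Matrix BigOperators Finset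

/-!
Fix the target `j` and let `v = h(·, j)` and `r = 1 + (P v)_j`, the mean return time to `j`.
The hitting-time recursion says `(I - P) v = 𝟙 - r e_j`. Pairing with the stationary `π`
kills the left side, which gives Kac's formula `π_j r = 1`. Since `Π v` is constant and
`F 𝟙 = 𝟙`, applying `F` to `(I - P + Π) v = c 𝟙 - r e_j` gives `v_i = c - r F_{ij}`;
evaluating at `i = j`, where `v_j = 0`, eliminates `c`.
-/

namespace Matrix

variable {X R : Type*} [Fintype X] [DecidableEq X] [CommRing R]

theorem sub_mulVec_eq_of_hitting_rec (P : Matrix X X R) {v : X → R} {j : X} (hj : v j = 0)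
    (hrec : ∀ i, i ≠ j → v i = 1 + (P *ᵥ v) i) :
    v - P *ᵥ v = 1 - Pi.single j (1 + (P *ᵥ v) j) := by
  funext i
  by_cases hi : i = j
  · subst hi
    simp [hj]
  · simp [hi, hrec i hi]

theorem stationary_mul_eq_one_of_sub_mulVec_eq {P : Matrix X X R} {π v : X → R} {j : X} {r : R}
    (hstat : π ᵥ* P = π) (hsum : ∑ i, π i = 1) (hv : v - P *ᵥ v = 1 - Pi.single j r) :
    π j * r = 1 := by
  have hzero : π ⬝ᵥ (v - P *ᵥ v) = 0 := by
    rw [dotProduct_sub, dotProduct_mulVec, hstat, sub_self]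
  rw [hv, dotProduct_sub, dotProduct_single, dotProduct_one, hsum] at hzero
  linear_combination -hzero

theorem apply_eq_of_mul_eq_one_of_mulVec_eq {F A : Matrix X X R} {v : X → R} {j : X} {c r : R}
    (hFA : F * A = 1) (hA : A *ᵥ 1 = 1) (hv : A *ᵥ v = c • 1 - Pi.single j r) (i : X) :
    v i = c - F i j * r := by
  have hF : F *ᵥ 1 = 1 := by
    conv_lhs => rw [← hA, mulVec_mulVec, hFA, one_mulVec]
  have hFv : v = F *ᵥ (A *ᵥ v) := by rw [mulVec_mulVec, hFA, one_mulVec]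
  rw [hFv, hv, mulVec_sub, mulVec_smul, hF, mulVec_single]
  simp [mul_comm]

end Matrix

theorem stmt_3_general
    {X : Type*} [Fintype X] [DecidableEq X]
    (P : Matrix X X ℝ)
    (hP_row : ∀ i, ∑ j, P i j = 1)
    (pi : X → ℝ)
    (hpi_sum : ∑ i, pi i = 1)
    (hpi_stat : ∀ j, ∑ i, pi i * P i j = pi j)
    (PiM : Matrix X X ℝ)
    (hPiM : ∀ i j, PiM i j = pi j)
    (F : Matrix X X ℝ)
    (hF1 : F * (1 - P + PiM) = 1)
    (h : X → X → ℝ)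
    (hdiag : ∀ j, h j j = 0)
    (hrec : ∀ i j, i ≠ j → h i j = 1 + ∑ k, P i k * h k j)
    : ∀ i j, pi j * h i j = F j j - F i j := by
  intro i j
  set v : X → ℝ := fun k => h k j
  set r : ℝ := 1 + (P *ᵥ v) j
  have hPiM_mulVec : ∀ w, PiM *ᵥ w = (pi ⬝ᵥ w) • 1 := fun w => by
    funext k
    simp [mulVec, dotProduct, hPiM]
  have hP_one : P *ᵥ 1 = 1 := by
    funext k
    simp [mulVec, dotProduct, hP_row]
  have hPv : v - P *ᵥ v = 1 - Pi.single j r :=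
    sub_mulVec_eq_of_hitting_rec P (hdiag j) fun k hk => hrec k j hk
  have hkac : pi j * r = 1 :=
    stationary_mul_eq_one_of_sub_mulVec_eq (funext hpi_stat) hpi_sum hPv
  have hA_one : (1 - P + PiM) *ᵥ 1 = 1 := by
    rw [add_mulVec, sub_mulVec, one_mulVec, hP_one, hPiM_mulVec, dotProduct_one, hpi_sum]
    simp
  have hA_v : (1 - P + PiM) *ᵥ v = (1 + pi ⬝ᵥ v) • 1 - Pi.single j r := by
    rw [add_mulVec, sub_mulVec, one_mulVec, hPv, hPiM_mulVec]
    module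
  have hvi := apply_eq_of_mul_eq_one_of_mulVec_eq hF1 hA_one hA_v i
  have hvj := apply_eq_of_mul_eq_one_of_mulVec_eq hF1 hA_one hA_v j
  simp only [v, hdiag] at hvi hvj
  linear_combination pi j * hvi - pi j * hvj + (F j j - F i j) * hkac

theorem stmt_3
    {X : Type*} [Fintype X] [Nonempty X] [DecidableEq X]
    (P : Matrix X X ℝ)
    (hP_nonneg : ∀ i j, 0 ≤ P i j)
    (hP_row : ∀ i, ∑ j, P i j = 1)
    (hP_prim : ∃ N : ℕ, 1 ≤ N ∧ ∀ i j, 0 < (P ^ N) i j)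
    (pi : X → ℝ)
    (hpi_pos : ∀ i, 0 < pi i)
    (hpi_sum : ∑ i, pi i = 1)
    (hpi_stat : ∀ j, ∑ i, pi i * P i j = pi j)
    (PiM : Matrix X X ℝ)
    (hPiM : ∀ i j, PiM i j = pi j)
    (F : Matrix X X ℝ)
    (hF1 : F * (1 - P + PiM) = 1)
    (hF2 : (1 - P + PiM) * F = 1)
    (h : X → X → ℝ)
    (hdiag : ∀ j, h j j = 0)
    (hrec : ∀ i j, i ≠ j → h i j = 1 + ∑ k, P i k * h k j)
    : ∀ i j, pi j * h i j = F j j - F i j :=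
  stmt_3_general P hP_row pi hpi_sum hpi_stat PiM hPiM F hF1 h hdiag hrec
end

section
/- (Mean hitting time representation of the resistance distance.) Let P be a primitive stochastic matrix on a finite nonempty state space X with stationary distribution π, F the fundamental matrix, Ω the resistance distance, and h the mean hitting times of the chain. Then for all states i, j one has Ω_{i,j} = π_j · h(i,j) + π_i · h(j,i). -/
open Matrix BigOperators Finset

/-- Entrywise: powers of a nonnegative matrix dominated by `B` are nonnegative and
dominated by powers of `B`. -/
lemma aux_pow_le {X : Type*} [Fintype X] [DecidableEq X]
    (A B : Matrix X X ℝ) (hA : ∀ i j, 0 ≤ A i j) (hAB : ∀ i j, A i j ≤ B i j)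
    (n : ℕ) : ∀ i j, 0 ≤ (A ^ n) i j ∧ (A ^ n) i j ≤ (B ^ n) i j := by
  induction n with
  | zero =>
      intro i j
      simp only [pow_zero, Matrix.one_apply]
      split <;> norm_num
  | succ n ih =>
      intro i j
      rw [pow_succ, pow_succ]
      simp only [Matrix.mul_apply]
      constructor
      · exact Finset.sum_nonneg fun k _ => mul_nonneg (ih i k).1 (hA k j)
      · refine Finset.sum_le_sum fun k _ => ?_
        exact mul_le_mul (ih i k).2 (hAB k j) (hA k j) ((ih i k).1.trans (ih i k).2)

/-- Row sums of powers of a stochastic matrix are 1. -/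
lemma aux_pow_row {X : Type*} [Fintype X] [DecidableEq X]
    (P : Matrix X X ℝ) (hP_row : ∀ i, ∑ j, P i j = 1) (n : ℕ) :
    ∀ i, ∑ j, (P ^ n) i j = 1 := by
  induction n with
  | zero => intro i; simp [Matrix.one_apply]
  | succ n ih =>
      intro i
      rw [pow_succ]
      simp only [Matrix.mul_apply]
      rw [Finset.sum_comm]
      calc ∑ k, ∑ j, (P ^ n) i k * P k j
          = ∑ k, (P ^ n) i k * ∑ j, P k j := by
            simp [Finset.mul_sum]
        _ = 1 := by simp [hP_row, ih]

/-- Uniqueness core: a function harmonic off `j` and vanishing at `j` is zero,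
for a primitive stochastic matrix. -/
lemma aux_unique {X : Type*} [Fintype X] [Nonempty X] [DecidableEq X]
    (P : Matrix X X ℝ)
    (hP_nonneg : ∀ i j, 0 ≤ P i j)
    (hP_row : ∀ i, ∑ j, P i j = 1)
    (N : ℕ) (hN1 : 1 ≤ N) (hN : ∀ i j, 0 < (P ^ N) i j)
    (j : X) (d : X → ℝ) (hdj : d j = 0)
    (hd : ∀ i, i ≠ j → d i = ∑ k, P i k * d k) : ∀ i, d i = 0 := by
  classical
  set Q : Matrix X X ℝ := Matrix.of fun i k => if i = j ∨ k = j then 0 else P i k with hQdef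
  have hQ_apply : ∀ i k, Q i k = if i = j ∨ k = j then 0 else P i k := fun i k => rfl
  have hQnn : ∀ i k, 0 ≤ Q i k := by
    intro i k; rw [hQ_apply]; split
    · exact le_refl 0
    · exact hP_nonneg i k
  have hQP : ∀ i k, Q i k ≤ P i k := by
    intro i k; rw [hQ_apply]; split
    · exact hP_nonneg i k
    · exact le_refl _
  -- Q fixes d
  have hQd : ∀ i, ∑ k, Q i k * d k = d i := by
    intro i
    by_cases hi : i = j
    · subst hi
      rw [hdj]
      apply Finset.sum_eq_zero
      intro k _
      rw [hQ_apply]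
      simp
    · rw [hd i hi]
      apply Finset.sum_congr rfl
      intro k _
      by_cases hk : k = j
      · subst hk; rw [hdj]; ring
      · rw [hQ_apply]; simp [hi, hk]
  -- Q^n fixes d
  have hQnd : ∀ n : ℕ, ∀ i, ∑ k, (Q ^ n) i k * d k = d i := by
    intro n
    induction n with
    | zero => intro i; simp [Matrix.one_apply]
    | succ n ih =>
        intro i
        rw [pow_succ]
        simp only [Matrix.mul_apply]
        calc ∑ k, (∑ l, (Q ^ n) i l * Q l k) * d k
            = ∑ l, (Q ^ n) i l * ∑ k, Q l k * d k := by
              simp only [Finset.sum_mul, Finset.mul_sum]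
              rw [Finset.sum_comm]
              apply Finset.sum_congr rfl
              intro l _
              apply Finset.sum_congr rfl
              intro k _
              ring
          _ = ∑ l, (Q ^ n) i l * d l := by
              apply Finset.sum_congr rfl
              intro l _
              rw [hQd l]
          _ = d i := ih i
  -- column j of Q^N vanishes
  have hcol : ∀ i, (Q ^ N) i j = 0 := by
    intro i
    obtain ⟨m, rfl⟩ : ∃ m, N = m + 1 := ⟨N - 1, by omega⟩
    rw [pow_succ]
    simp only [Matrix.mul_apply]
    apply Finset.sum_eq_zero
    intro l _
    rw [hQ_apply]
    simp
  have hpow := aux_pow_le Q P hQnn hQP N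
  have hProw := aux_pow_row P hP_row N
  -- row sums of Q^N are at most 1 - (P^N) i j
  have hrowQ : ∀ i, ∑ k, (Q ^ N) i k ≤ 1 - (P ^ N) i j := by
    intro i
    have h1 : ∑ k, (Q ^ N) i k = ∑ k ∈ Finset.univ.erase j, (Q ^ N) i k := by
      rw [Finset.sum_erase_eq_sub (Finset.mem_univ j), hcol i, sub_zero]
    have h2 : ∑ k ∈ Finset.univ.erase j, (Q ^ N) i k ≤
        ∑ k ∈ Finset.univ.erase j, (P ^ N) i k :=
      Finset.sum_le_sum fun k _ => (hpow i k).2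
    have h3 : ∑ k ∈ Finset.univ.erase j, (P ^ N) i k = 1 - (P ^ N) i j := by
      rw [Finset.sum_erase_eq_sub (Finset.mem_univ j), hProw i]
    rw [h1, h3.symm.trans rfl] at *
    linarith [h2, h3]
  -- maximum principle
  obtain ⟨i0, -, hi0⟩ := Finset.exists_max_image Finset.univ (fun i => |d i|)
    ⟨Classical.arbitrary X, Finset.mem_univ _⟩
  set M := |d i0| with hM
  have hMnn : 0 ≤ M := abs_nonneg _
  have hle : ∀ i, |d i| ≤ M := fun i => hi0 i (Finset.mem_univ i)
  have hbound : M ≤ (1 - (P ^ N) i0 j) * M := by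
    have := hQnd N i0
    calc M = |∑ k, (Q ^ N) i0 k * d k| := by rw [this]
      _ ≤ ∑ k, |(Q ^ N) i0 k * d k| := Finset.abs_sum_le_sum_abs _ _
      _ = ∑ k, (Q ^ N) i0 k * |d k| := by
          apply Finset.sum_congr rfl
          intro k _
          rw [abs_mul, abs_of_nonneg (hpow i0 k).1]
      _ ≤ ∑ k, (Q ^ N) i0 k * M :=
          Finset.sum_le_sum fun k _ => mul_le_mul_of_nonneg_left (hle k) (hpow i0 k).1
      _ = (∑ k, (Q ^ N) i0 k) * M := by rw [Finset.sum_mul]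
      _ ≤ (1 - (P ^ N) i0 j) * M := mul_le_mul_of_nonneg_right (hrowQ i0) hMnn
  have hpos := hN i0 j
  have hM0 : M = 0 := by nlinarith
  intro i
  have := hle i
  rw [hM0] at this
  exact abs_nonpos_iff.mp this

theorem stmt_4
    {X : Type*} [Fintype X] [Nonempty X] [DecidableEq X]
    (P : Matrix X X ℝ)
    (hP_nonneg : ∀ i j, 0 ≤ P i j)
    (hP_row : ∀ i, ∑ j, P i j = 1)
    (hP_prim : ∃ N : ℕ, 1 ≤ N ∧ ∀ i j, 0 < (P ^ N) i j)
    (pi : X → ℝ)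
    (hpi_pos : ∀ i, 0 < pi i)
    (hpi_sum : ∑ i, pi i = 1)
    (hpi_stat : ∀ j, ∑ i, pi i * P i j = pi j)
    (PiM : Matrix X X ℝ)
    (hPiM : ∀ i j, PiM i j = pi j)
    (F : Matrix X X ℝ)
    (hF1 : F * (1 - P + PiM) = 1)
    (hF2 : (1 - P + PiM) * F = 1)
    (Ω : X → X → ℝ)
    (hΩ : ∀ i j, Ω i j = F i i + F j j - F i j - F j i)
    (h : X → X → ℝ)
    (hdiag : ∀ j, h j j = 0)
    (hrec : ∀ i j, i ≠ j → h i j = 1 + ∑ k, P i k * h k j)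
    : ∀ i j, Ω i j = pi j * h i j + pi i * h j i := by
  classical
  obtain ⟨N, hN1, hN⟩ := hP_prim
  -- PiM * (1 - P + PiM) = PiM
  have h1 : PiM * (1 - P + PiM) = PiM := by
    ext i j
    rw [Matrix.mul_apply, hPiM]
    calc ∑ k, PiM i k * (1 - P + PiM) k j
        = ∑ k, ((if k = j then pi k else 0) - pi k * P k j + pi k * pi j) := by
          apply Finset.sum_congr rfl
          intro k _
          simp only [Matrix.add_apply, Matrix.sub_apply, Matrix.one_apply, hPiM]
          split <;> ring
      _ = pi j := by
          rw [Finset.sum_add_distrib, Finset.sum_sub_distrib,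
            Finset.sum_ite_eq' Finset.univ j, ← Finset.sum_mul, hpi_stat, hpi_sum]
          simp
  have hPiMF : PiM * F = PiM := by
    calc PiM * F = (PiM * (1 - P + PiM)) * F := by rw [h1]
      _ = PiM * ((1 - P + PiM) * F) := by rw [Matrix.mul_assoc]
      _ = PiM := by rw [hF2, Matrix.mul_one]
  have hPiF : ∀ j, ∑ k, pi k * F k j = pi j := by
    intro j
    have := congrArg (fun M : Matrix X X ℝ => M (Classical.arbitrary X) j) hPiMF
    simpa [Matrix.mul_apply, hPiM] using this
  -- (P F) i j = F i j + pi j for i ≠ j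
  have hPF : ∀ i j, i ≠ j → ∑ k, P i k * F k j = F i j + pi j := by
    intro i j hij
    have e : ((1 - P + PiM) * F) i j = (1 : Matrix X X ℝ) i j := by rw [hF2]
    rw [Matrix.mul_apply, Matrix.one_apply_ne hij] at e
    have e2 : ∑ k, (1 - P + PiM) i k * F k j
        = ∑ k, ((if i = k then F k j else 0) - P i k * F k j + pi k * F k j) := by
      apply Finset.sum_congr rfl
      intro k _
      simp only [Matrix.add_apply, Matrix.sub_apply, Matrix.one_apply, hPiM]
      split <;> ring
    rw [e2, Finset.sum_add_distrib, Finset.sum_sub_distrib,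
      Finset.sum_ite_eq Finset.univ i, hPiF j] at e
    simp only [Finset.mem_univ, if_pos] at e
    linarith
  -- key identity: pi j * h i j = F j j - F i j
  have key : ∀ j i, pi j * h i j = F j j - F i j := by
    intro j
    set d : X → ℝ := fun i => pi j * h i j - (F j j - F i j) with hddef
    have hd0 : d j = 0 := by simp [hddef, hdiag]
    have hdrec : ∀ i, i ≠ j → d i = ∑ k, P i k * d k := by
      intro i hij
      have e1 : ∑ k, P i k * d k
          = pi j * ∑ k, P i k * h k j - F j j * ∑ k, P i k + ∑ k, P i k * F k j := by
        have hterm : ∀ k, P i k * d k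
            = pi j * (P i k * h k j) - F j j * P i k + P i k * F k j := by
          intro k; simp only [hddef]; ring
        rw [Finset.sum_congr rfl (fun k _ => hterm k), Finset.sum_add_distrib,
          Finset.sum_sub_distrib, ← Finset.mul_sum, ← Finset.mul_sum]
      rw [e1, hP_row i, hPF i j hij]
      simp only [hddef]
      rw [hrec i j hij]
      ring
    have hz := aux_unique P hP_nonneg hP_row N hN1 hN j d hd0 hdrec
    intro i
    have := hz i
    simp only [hddef] at this
    linarith
  intro i j
  rw [hΩ i j]
  have k1 := key j i
  have k2 := key i j
  linarith
end

section
/- (Commute time representation for doubly stochastic P.) Let P be a primitive stochastic matrix on a finite nonempty state space X that is moreover doubly stochastic, with stationary distribution π, F the fundamental matrix, Ω the resistance distance, and h the mean hitting times of the chain. Then for all states i, j one has Ω_{i,j} = (h(i,j) + h(j,i)) / |X|, i.e. the resistance distance is the commute time t^c_{i,j} := h(i,j) + h(j,i) scaled by 1/|X|. -/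
open Matrix BigOperators Finset

theorem stmt_5
    {X : Type*} [Fintype X] [Nonempty X] [DecidableEq X]
    (P : Matrix X X ℝ)
    (hP_nonneg : ∀ i j, 0 ≤ P i j)
    (hP_row : ∀ i, ∑ j, P i j = 1)
    (hP_prim : ∃ N : ℕ, 1 ≤ N ∧ ∀ i j, 0 < (P ^ N) i j)
    (pi : X → ℝ)
    (hpi_pos : ∀ i, 0 < pi i)
    (hpi_sum : ∑ i, pi i = 1)
    (hpi_stat : ∀ j, ∑ i, pi i * P i j = pi j)
    (PiM : Matrix X X ℝ)
    (hPiM : ∀ i j, PiM i j = pi j)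
    (hP_col : ∀ j, ∑ i, P i j = 1)
    (F : Matrix X X ℝ)
    (hF1 : F * (1 - P + PiM) = 1)
    (hF2 : (1 - P + PiM) * F = 1)
    (Ω : X → X → ℝ)
    (hΩ : ∀ i j, Ω i j = F i i + F j j - F i j - F j i)
    (h : X → X → ℝ)
    (hdiag : ∀ j, h j j = 0)
    (hrec : ∀ i j, i ≠ j → h i j = 1 + ∑ k, P i k * h k j)
    : ∀ i j, Ω i j = (h i j + h j i) / (Fintype.card X : ℝ) := by
  set n : ℝ := (Fintype.card X : ℝ) with hn
  have hnpos : 0 < n := by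
    have : 0 < Fintype.card X := Fintype.card_pos
    rw [hn]; exact_mod_cast this
  set M : Matrix X X ℝ := 1 - P + PiM with hM
  have hMentry : ∀ i j, M i j = (if i = j then (1:ℝ) else 0) - P i j + pi j := by
    intro i j
    simp [hM, Matrix.add_apply, Matrix.sub_apply, Matrix.one_apply, hPiM]
  -- pi is a left fixed vector of M
  have hpiM : pi ᵥ* M = pi := by
    funext j
    have : ∑ i, pi i * M i j = pi j := by
      simp only [hMentry, mul_add, mul_sub, Finset.sum_add_distrib, Finset.sum_sub_distrib]
      rw [← Finset.sum_mul, hpi_sum, hpi_stat]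
      have : ∑ i, pi i * (if i = j then (1:ℝ) else 0) = pi j := by
        simp [Finset.sum_ite_eq']
      rw [this]; ring
    simpa [Matrix.vecMul, dotProduct] using this
  -- uniform is mapped to pi by M
  have huM : (fun _ : X => 1 / n) ᵥ* M = pi := by
    funext j
    have : ∑ i, (1 / n) * M i j = pi j := by
      rw [← Finset.mul_sum]
      have hsum : ∑ i, M i j = n * pi j := by
        simp only [hMentry, Finset.sum_add_distrib, Finset.sum_sub_distrib, hP_col j]
        simp [Finset.sum_ite_eq', Finset.card_univ, hn, mul_comm]
      rw [hsum]; field_simp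
    simpa [Matrix.vecMul, dotProduct] using this
  -- hence pi is uniform
  have hpi_unif : ∀ j, pi j = 1 / n := by
    have e1 : (fun _ : X => 1 / n) ᵥ* (M * F) = pi ᵥ* F := by
      rw [← Matrix.vecMul_vecMul, huM]
    have e2 : pi ᵥ* (M * F) = pi ᵥ* F := by
      rw [← Matrix.vecMul_vecMul, hpiM]
    rw [hF2, Matrix.vecMul_one] at e1 e2
    intro j
    have := congrFun e1 j
    have := (congrFun e1 j).trans (congrFun e2 j).symm
    exact this.symm
  -- row sums of F are 1
  have hMones : M *ᵥ (fun _ : X => (1:ℝ)) = fun _ => 1 := by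
    funext i
    have : ∑ j, M i j * 1 = 1 := by
      simp only [mul_one, hMentry, Finset.sum_add_distrib, Finset.sum_sub_distrib]
      rw [hP_row i, hpi_sum]
      simp
    simpa [Matrix.mulVec, dotProduct] using this
  have hFrow : ∀ i, ∑ k, F i k = 1 := by
    intro i
    have : F *ᵥ (fun _ : X => (1:ℝ)) = fun _ => 1 := by
      rw [← hMones, Matrix.mulVec_mulVec, hF1, hMones]
      simp [Matrix.one_mulVec]
    have := congrFun this i
    simpa [Matrix.mulVec, dotProduct] using this
  -- key formula: h i j = n * (F j j - F i j)
  have key : ∀ i j, h i j = n * (F j j - F i j) := by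
    intro i j
    set v : X → ℝ := fun i => h i j with hv
    set c : ℝ := 1 + ∑ k, P j k * h k j with hc
    set s : ℝ := ∑ k, pi k * h k j with hs
    have hMv : M *ᵥ v = fun i => (if i = j then 1 - c else 1) + s := by
      funext i
      have expand : ∑ k, M i k * v k = v i - (∑ k, P i k * h k j) + s := by
        simp only [hMentry, sub_mul, add_mul, Finset.sum_add_distrib,
          Finset.sum_sub_distrib, hv, hs]
        have : ∑ k, (if i = k then (1:ℝ) else 0) * h k j = h i j := by
          simp [Finset.sum_ite_eq]
        rw [this]
      have : v i - (∑ k, P i k * h k j) = if i = j then 1 - c else 1 := by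
        by_cases hij : i = j
        · subst hij
          simp [hv, hdiag, hc]
        · rw [if_neg hij]
          have := hrec i j hij
          simp only [hv]
          rw [this]; ring
      simp only [Matrix.mulVec, dotProduct]
      rw [expand, this]
    have hvF : v = F *ᵥ (fun i => (if i = j then 1 - c else 1) + s) := by
      rw [← hMv, Matrix.mulVec_mulVec, hF1, Matrix.one_mulVec]
    have hvi : ∀ i, v i = (1 + s) - c * F i j := by
      intro i
      have := congrFun hvF i
      simp only [Matrix.mulVec, dotProduct] at this
      rw [this]
      have : ∀ k, F i k * ((if k = j then 1 - c else 1) + s)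
          = F i k * (1 + s) - c * (F i k * (if k = j then (1:ℝ) else 0)) := by
        intro k
        by_cases hkj : k = j <;> simp [hkj] <;> ring
      rw [Finset.sum_congr rfl (fun k _ => this k)]
      rw [Finset.sum_sub_distrib, ← Finset.sum_mul, hFrow i, ← Finset.mul_sum]
      have : ∑ k, F i k * (if k = j then (1:ℝ) else 0) = F i j := by
        simp [Finset.sum_ite_eq']
      rw [this]; ring
    -- evaluate at j to find 1 + s
    have hjj : (1 + s) = c * F j j := by
      have := hvi j
      simp only [hv, hdiag] at this
      linarith
    -- determine c = n using pi
    have hcn : c = n := by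
      have lhs : ∑ i, pi i * ((if i = j then 1 - c else 1) + s) = s := by
        have d1 : pi ⬝ᵥ (M *ᵥ v) = (pi ᵥ* M) ⬝ᵥ v := Matrix.dotProduct_mulVec pi M v
        rw [hpiM, hMv] at d1
        simpa [dotProduct, hs, hv] using d1
      have expand : ∑ i, pi i * ((if i = j then 1 - c else 1) + s)
          = 1 + s - c * pi j := by
        have : ∀ i, pi i * ((if i = j then 1 - c else 1) + s)
            = pi i * (1 + s) - c * (pi i * (if i = j then (1:ℝ) else 0)) := by
          intro i
          by_cases hij : i = j <;> simp [hij] <;> ring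
        rw [Finset.sum_congr rfl (fun i _ => this i)]
        rw [Finset.sum_sub_distrib, ← Finset.sum_mul, hpi_sum, ← Finset.mul_sum]
        have : ∑ i, pi i * (if i = j then (1:ℝ) else 0) = pi j := by
          simp [Finset.sum_ite_eq']
        rw [this]; ring
      rw [expand] at lhs
      have hpij : pi j = 1 / n := hpi_unif j
      rw [hpij] at lhs
      field_simp at lhs
      linarith
    have := hvi i
    simp only [hv] at this ⊢
    rw [this, hjj, hcn]; ring
  intro i j
  rw [hΩ, key i j, key j i]
  field_simp
  ring
end

section
/- (Non-negativity.) Let P be a primitive stochastic matrix on a finite nonempty state space X with stationary distribution π, F the fundamental matrix, and Ω the resistance distance. Then for all states i, j one has Ω_{i,j} ≥ 0, and Ω_{i,j} = 0 if and only if i = j. -/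
open Matrix BigOperators Finset

theorem stmt_6
    {X : Type*} [Fintype X] [Nonempty X] [DecidableEq X]
    (P : Matrix X X ℝ)
    (hP_nonneg : ∀ i j, 0 ≤ P i j)
    (hP_row : ∀ i, ∑ j, P i j = 1)
    (hP_prim : ∃ N : ℕ, 1 ≤ N ∧ ∀ i j, 0 < (P ^ N) i j)
    (pi : X → ℝ)
    (hpi_pos : ∀ i, 0 < pi i)
    (hpi_sum : ∑ i, pi i = 1)
    (hpi_stat : ∀ j, ∑ i, pi i * P i j = pi j)
    (PiM : Matrix X X ℝ)
    (hPiM : ∀ i j, PiM i j = pi j)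
    (F : Matrix X X ℝ)
    (hF1 : F * (1 - P + PiM) = 1)
    (hF2 : (1 - P + PiM) * F = 1)
    (Ω : X → X → ℝ)
    (hΩ : ∀ i j, Ω i j = F i i + F j j - F i j - F j i)
    : ∀ i j, 0 ≤ Ω i j ∧ (Ω i j = 0 ↔ i = j) := by
  set A : Matrix X X ℝ := 1 - P + PiM with hA
  -- π A = π
  have hpiA : ∀ k, ∑ m, pi m * A m k = pi k := by
    intro k
    have expand : ∀ m, pi m * A m k
        = (if m = k then pi m else 0) - pi m * P m k + pi m * pi k := by
      intro m
      rw [hA]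
      simp only [Matrix.sub_apply, Matrix.add_apply, Matrix.one_apply, hPiM]
      split_ifs <;> ring
    rw [Finset.sum_congr rfl (fun m _ => expand m), Finset.sum_add_distrib,
      Finset.sum_sub_distrib, Finset.sum_ite_eq' univ k (fun m => pi m),
      if_pos (Finset.mem_univ k), hpi_stat k, ← Finset.sum_mul, hpi_sum, one_mul]
    ring
  -- π F = π
  have hpiF : ∀ j, ∑ k, pi k * F k j = pi j := by
    intro j
    have h1 : ∑ k, pi k * F k j = ∑ k, (∑ m, pi m * A m k) * F k j :=
      Finset.sum_congr rfl fun k _ => by rw [hpiA k]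
    have h2 : ∑ k, (∑ m, pi m * A m k) * F k j
        = ∑ m, pi m * ∑ k, A m k * F k j := by
      simp_rw [Finset.sum_mul]
      rw [Finset.sum_comm]
      apply Finset.sum_congr rfl
      intro m _
      rw [Finset.mul_sum]
      exact Finset.sum_congr rfl fun k _ => by ring
    have h3 : ∀ m, ∑ k, A m k * F k j = (if m = j then (1:ℝ) else 0) := by
      intro m
      have := congrFun (congrFun hF2 m) j
      rwa [Matrix.mul_apply, Matrix.one_apply] at this
    rw [h1, h2, Finset.sum_congr rfl (fun m _ => by rw [h3 m])]
    simp [mul_ite]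
  -- the column equation: F i j - (P c)_i + π_j = δ_{ij}
  have heq : ∀ i j, F i j - (∑ k, P i k * F k j) + pi j = (if i = j then (1:ℝ) else 0) := by
    intro i j
    have h := congrFun (congrFun hF2 i) j
    rw [Matrix.mul_apply, Matrix.one_apply] at h
    have expand : ∀ k, A i k * F k j
        = (if i = k then F k j else 0) - P i k * F k j + pi k * F k j := by
      intro k
      rw [hA]
      simp only [Matrix.sub_apply, Matrix.add_apply, Matrix.one_apply, hPiM]
      split_ifs <;> ring
    rw [Finset.sum_congr rfl (fun k _ => expand k), Finset.sum_add_distrib,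
      Finset.sum_sub_distrib, Finset.sum_ite_eq univ i (fun k => F k j),
      if_pos (Finset.mem_univ i), hpiF j] at h
    exact h
  -- maximizer of the column must be j
  have maxj : ∀ j i, (∀ k, F k j ≤ F i j) → i = j := by
    intro j i hi
    by_contra hij
    have h := heq i j
    rw [if_neg hij] at h
    have h1 : ∑ k, P i k * F k j ≤ ∑ k, P i k * F i j :=
      Finset.sum_le_sum fun k _ => mul_le_mul_of_nonneg_left (hi k) (hP_nonneg i k)
    have h2 : ∑ k, P i k * F i j = F i j := by
      rw [← Finset.sum_mul, hP_row, one_mul]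
    nlinarith [hpi_pos j]
  -- strict max at j
  have key : ∀ j i, i ≠ j → F i j < F j j := by
    intro j
    obtain ⟨i₀, hi₀⟩ := Finite.exists_max (fun k => F k j)
    have hij0 : i₀ = j := maxj j i₀ hi₀
    intro i hij
    have hle : F i j ≤ F j j := hij0 ▸ hi₀ i
    rcases hle.lt_or_eq with h | h
    · exact h
    · exact absurd (maxj j i (fun k => h ▸ (hij0 ▸ hi₀ k))) hij
  intro i j
  rcases eq_or_ne i j with rfl | hij
  · have h0 : Ω i i = 0 := by rw [hΩ]; ring
    exact ⟨h0.ge, by simp [h0]⟩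
  · have h1 := key j i hij
    have h2 := key i j (Ne.symm hij)
    have hpos : 0 < Ω i j := by rw [hΩ]; linarith
    exact ⟨hpos.le, fun h => absurd h hpos.ne', fun h => absurd h hij⟩
end

section
/- (Triangle inequality in the doubly stochastic case.) Let P be a primitive stochastic matrix on a finite nonempty state space X that is moreover doubly stochastic, with stationary distribution π, F the fundamental matrix, and Ω the resistance distance. Then for all states i, j, k one has Ω_{i,j} ≤ Ω_{i,k} + Ω_{k,j}. In particular, Ω defines a metric on X when P is doubly stochastic. -/
/-!
Let `h a b = (F b b - F a b) / π b` be the mean first-passage times. The identity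
`(1 - P + Π) F = 1` yields the first-step equations `h a b = 1 + ∑ l, P a l * h l b` for `a ≠ b`,
and `Ω i j = π j * h i j + π i * h j i`. The function `x ↦ h x c + h c b - h x b` is then harmonic
off `{b, c}` and nonnegative on `{b, c}`, so the minimum principle for irreducible `P` gives the
triangle inequality for hitting times. Since every stationary distribution `ρ` equals `π F`, the
stationary distribution is unique; double stochasticity makes the uniform distribution stationary,
so `π` is uniform and `Ω i j = (h i j + h j i) / |X|` inherits the triangle inequality.
-/

open Matrix BigOperators Finset

section Stationary

variable {X : Type*} [Fintype X] {P : Matrix X X ℝ} {π ρ : X → ℝ}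

lemma vecMul_replicateRow (ρ π : X → ℝ) : ρ ᵥ* replicateRow X π = (∑ i, ρ i) • π := by
  ext j
  simp [vecMul, dotProduct, replicateRow, Finset.sum_mul]

lemma const_vecMul_of_colSum (hP_col : ∀ j, ∑ i, P i j = 1) (c : ℝ) :
    (fun _ ↦ c) ᵥ* P = fun _ ↦ c := by
  ext j
  simp [vecMul, dotProduct, ← Finset.mul_sum, hP_col]

variable [DecidableEq X] {F : Matrix X X ℝ}

lemma vecMul_one_sub_add_replicateRow (hρ : ρ ᵥ* P = ρ) (hρ1 : ∑ i, ρ i = 1) :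
    ρ ᵥ* (1 - P + replicateRow X π) = π := by
  rw [vecMul_add, vecMul_sub, vecMul_one, hρ, vecMul_replicateRow, hρ1, sub_self, zero_add,
    one_smul]

lemma eq_vecMul_of_stationary (hF : (1 - P + replicateRow X π) * F = 1)
    (hρ : ρ ᵥ* P = ρ) (hρ1 : ∑ i, ρ i = 1) : ρ = π ᵥ* F := by
  rw [← vecMul_one_sub_add_replicateRow (π := π) hρ hρ1, vecMul_vecMul, hF, vecMul_one]

lemma stationary_unique (hF : (1 - P + replicateRow X π) * F = 1)
    (hπ : π ᵥ* P = π) (hπ1 : ∑ i, π i = 1) (hρ : ρ ᵥ* P = ρ) (hρ1 : ∑ i, ρ i = 1) : ρ = π := by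
  rw [eq_vecMul_of_stationary hF hρ hρ1, ← eq_vecMul_of_stationary hF hπ hπ1]

lemma stationary_eq_uniform [Nonempty X] (hF : (1 - P + replicateRow X π) * F = 1)
    (hπ : π ᵥ* P = π) (hπ1 : ∑ i, π i = 1) (hP_col : ∀ j, ∑ i, P i j = 1) :
    π = fun _ ↦ (Fintype.card X : ℝ)⁻¹ :=
  (stationary_unique hF hπ hπ1 (const_vecMul_of_colSum hP_col _) (by simp)).symm

lemma fundamental_apply (hF : (1 - P + replicateRow X π) * F = 1) (hπF : π ᵥ* F = π) (a b : X) :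
    F a b = (if a = b then 1 else 0) + (P * F) a b - π b := by
  have h := congrFun (congrFun hF a) b
  have hRF : (replicateRow X π * F) a b = (π ᵥ* F) b := by
    simp [mul_apply, vecMul, dotProduct, replicateRow]
  rw [add_mul, sub_mul, one_mul, Matrix.add_apply, Matrix.sub_apply, hRF, hπF, one_apply] at h
  linarith

end Stationary

section MinimumPrinciple

variable {X : Type*} [Fintype X] {P : Matrix X X ℝ}

lemma apply_eq_of_superharmonic_of_isMin (hP_nonneg : ∀ i j, 0 ≤ P i j)
    (hP_row : ∀ i, ∑ j, P i j = 1) {g : X → ℝ} {x y : X} (hmin : ∀ z, g x ≤ g z)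
    (hx : ∑ z, P x z * g z ≤ g x) (hxy : 0 < P x y) : g y = g x := by
  have hterm : ∀ z ∈ univ, 0 ≤ P x z * (g z - g x) :=
    fun z _ ↦ mul_nonneg (hP_nonneg x z) (sub_nonneg.2 (hmin z))
  have hsum : ∑ z, P x z * (g z - g x) = 0 := by
    have : ∑ z, P x z * (g z - g x) = ∑ z, P x z * g z - g x := by
      simp [mul_sub, Finset.sum_sub_distrib, ← Finset.sum_mul, hP_row]
    linarith [Finset.sum_nonneg hterm]
  have hy := (Finset.sum_eq_zero_iff_of_nonneg hterm).1 hsum y (mem_univ y)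
  rcases mul_eq_zero.1 hy with h | h
  · exact absurd h hxy.ne'
  · linarith

lemma nonneg_of_superharmonic (hP : P.IsIrreducible) (hP_row : ∀ i, ∑ j, P i j = 1)
    {g : X → ℝ} {S : Set X} (hS : S.Nonempty) (hgS : ∀ x ∈ S, 0 ≤ g x)
    (hsuper : ∀ x ∉ S, ∑ z, P x z * g z ≤ g x) (x : X) : 0 ≤ g x := by
  obtain ⟨c, hc⟩ := hS
  obtain ⟨x₀, -, hx₀⟩ := Finset.exists_min_image univ g ⟨c, mem_univ c⟩
  by_contra! hneg
  have hx₀neg : g x₀ < 0 := (hx₀ x (mem_univ x)).trans_lt hneg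
  let := toQuiver P
  have hpath : ∀ {y} (_ : Quiver.Path x₀ y), g y = g x₀ := by
    intro y p
    induction p with
    | nil => rfl
    | @cons y z _ e ih =>
      have hmin : ∀ w, g y ≤ g w := fun w ↦ ih ▸ hx₀ w (mem_univ w)
      have hyS : y ∉ S := fun hy ↦ by linarith [hgS y hy]
      exact (apply_eq_of_superharmonic_of_isMin hP.nonneg hP_row hmin (hsuper y hyS)
        e.down).trans ih
  obtain ⟨p, -⟩ := hP.connected x₀ c
  linarith [hgS c hc, hpath p]

end MinimumPrinciple

section HittingTime

variable {X : Type*} {F : Matrix X X ℝ} {π : X → ℝ}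

/-- Kemeny–Snell formula for the mean first-passage time from `a` to `b`. -/
noncomputable def hittingTime (F : Matrix X X ℝ) (π : X → ℝ) (a b : X) : ℝ :=
  (F b b - F a b) / π b

@[simp]
lemma hittingTime_self (a : X) : hittingTime F π a a = 0 := by
  simp [hittingTime]

lemma diag_add_diag_sub_sub_eq (hπ : ∀ b, π b ≠ 0) (i j : X) :
    F i i + F j j - F i j - F j i = π j * hittingTime F π i j + π i * hittingTime F π j i := by
  simp only [hittingTime, mul_div_cancel₀ _ (hπ _)]
  ring

variable [Fintype X] [DecidableEq X] {P : Matrix X X ℝ}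

lemma hittingTime_eq_one_add (hP_row : ∀ i, ∑ j, P i j = 1)
    (hF : (1 - P + replicateRow X π) * F = 1) (hπF : π ᵥ* F = π) {a b : X} (hb : π b ≠ 0)
    (hab : a ≠ b) : hittingTime F π a b = 1 + ∑ l, P a l * hittingTime F π l b := by
  have hsum : ∑ l, P a l * hittingTime F π l b = (F b b - (P * F) a b) / π b := by
    simp only [hittingTime, mul_div_assoc', ← Finset.sum_div, mul_sub, Finset.sum_sub_distrib,
      ← Finset.sum_mul, hP_row, one_mul, mul_apply]
  rw [hsum, hittingTime, fundamental_apply hF hπF a b, if_neg hab]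
  field_simp
  ring

lemma hittingTime_nonneg (hP : P.IsIrreducible) (hP_row : ∀ i, ∑ j, P i j = 1)
    (hF : (1 - P + replicateRow X π) * F = 1) (hπF : π ᵥ* F = π) {b : X} (hb : π b ≠ 0)
    (a : X) : 0 ≤ hittingTime F π a b := by
  refine nonneg_of_superharmonic (g := (hittingTime F π · b)) (S := {b}) hP hP_row
    (Set.singleton_nonempty b) (by simp) (fun x hx ↦ ?_) a
  rw [hittingTime_eq_one_add hP_row hF hπF hb hx]
  linarith

lemma hittingTime_le_add (hP : P.IsIrreducible) (hP_row : ∀ i, ∑ j, P i j = 1)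
    (hF : (1 - P + replicateRow X π) * F = 1) (hπF : π ᵥ* F = π) (hπ : ∀ b, π b ≠ 0)
    (a b c : X) : hittingTime F π a b ≤ hittingTime F π a c + hittingTime F π c b := by
  suffices h : 0 ≤ hittingTime F π a c + hittingTime F π c b - hittingTime F π a b by linarith
  refine nonneg_of_superharmonic
    (g := fun x ↦ hittingTime F π x c + hittingTime F π c b - hittingTime F π x b) (S := {b, c})
    hP hP_row (Set.insert_nonempty b {c}) ?_ ?_ a
  · rintro x (rfl | rfl)
    · simpa using add_nonneg (hittingTime_nonneg hP hP_row hF hπF (hπ c) x)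
        (hittingTime_nonneg hP hP_row hF hπF (hπ x) c)
    · simp
  · intro x hx
    simp only [Set.mem_insert_iff, Set.mem_singleton_iff, not_or] at hx
    rw [hittingTime_eq_one_add hP_row hF hπF (hπ b) hx.1,
      hittingTime_eq_one_add hP_row hF hπF (hπ c) hx.2]
    simp only [mul_sub, mul_add, Finset.sum_sub_distrib, Finset.sum_add_distrib, ← Finset.sum_mul,
      hP_row, one_mul]
    linarith

end HittingTime

theorem stmt_8_general
    {X : Type*} [Fintype X] [Nonempty X] [DecidableEq X]
    (P : Matrix X X ℝ)
    (hP_nonneg : ∀ i j, 0 ≤ P i j)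
    (hP_row : ∀ i, ∑ j, P i j = 1)
    (hP_prim : ∃ N : ℕ, 1 ≤ N ∧ ∀ i j, 0 < (P ^ N) i j)
    (pi : X → ℝ)
    (hpi_pos : ∀ i, 0 < pi i)
    (hpi_sum : ∑ i, pi i = 1)
    (hpi_stat : ∀ j, ∑ i, pi i * P i j = pi j)
    (PiM : Matrix X X ℝ)
    (hPiM : ∀ i j, PiM i j = pi j)
    (hP_col : ∀ j, ∑ i, P i j = 1)
    (F : Matrix X X ℝ)
    (hF2 : (1 - P + PiM) * F = 1)
    (Ω : X → X → ℝ)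
    (hΩ : ∀ i j, Ω i j = F i i + F j j - F i j - F j i)
    : ∀ i j k, Ω i j ≤ Ω i k + Ω k j := by
  obtain rfl : PiM = replicateRow X pi := by ext; simp [hPiM, replicateRow]
  have hP : P.IsIrreducible := IsPrimitive.isIrreducible ⟨hP_nonneg, hP_prim⟩
  have hpiP : pi ᵥ* P = pi := funext hpi_stat
  have hpiF : pi ᵥ* F = pi := (eq_vecMul_of_stationary hF2 hpiP hpi_sum).symm
  have hpi_ne : ∀ i, pi i ≠ 0 := fun i ↦ (hpi_pos i).ne'
  have htri := hittingTime_le_add hP hP_row hF2 hpiF hpi_ne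
  have hc : ∀ i, pi i = (Fintype.card X : ℝ)⁻¹ :=
    congrFun (stationary_eq_uniform hF2 hpiP hpi_sum hP_col)
  intro i j k
  simp only [hΩ, diag_add_diag_sub_sub_eq hpi_ne, hc]
  have hc0 : 0 ≤ (Fintype.card X : ℝ)⁻¹ := by positivity
  linarith [mul_le_mul_of_nonneg_left (htri i j k) hc0, mul_le_mul_of_nonneg_left (htri j i k) hc0]

theorem stmt_8
    {X : Type*} [Fintype X] [Nonempty X] [DecidableEq X]
    (P : Matrix X X ℝ)
    (hP_nonneg : ∀ i j, 0 ≤ P i j)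
    (hP_row : ∀ i, ∑ j, P i j = 1)
    (hP_prim : ∃ N : ℕ, 1 ≤ N ∧ ∀ i j, 0 < (P ^ N) i j)
    (pi : X → ℝ)
    (hpi_pos : ∀ i, 0 < pi i)
    (hpi_sum : ∑ i, pi i = 1)
    (hpi_stat : ∀ j, ∑ i, pi i * P i j = pi j)
    (PiM : Matrix X X ℝ)
    (hPiM : ∀ i j, PiM i j = pi j)
    (hP_col : ∀ j, ∑ i, P i j = 1)
    (F : Matrix X X ℝ)
    (hF1 : F * (1 - P + PiM) = 1)
    (hF2 : (1 - P + PiM) * F = 1)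
    (Ω : X → X → ℝ)
    (hΩ : ∀ i j, Ω i j = F i i + F j j - F i j - F j i)
    : ∀ i j k, Ω i j ≤ Ω i k + Ω k j :=
  stmt_8_general P hP_nonneg hP_row hP_prim pi hpi_pos hpi_sum hpi_stat PiM hPiM hP_col F hF2 Ω hΩ
end

section
/- (Generalized sum rule for the resistance distance.) Let P be a primitive stochastic matrix on a finite nonempty state space X with stationary distribution π, F the fundamental matrix, and Ω the resistance distance. Let M and K be square real matrices indexed by X such that (i) every row of K sums to 1 (K·1 = 1 where 1 is the all-ones vector), and (ii) the matrix M(K − I) is symmetric. Then Σ_{i,j ∈ X} (M(K − I))_{i,j} · Ω_{i,j} = 2 · Tr(M(I − K)F). -/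
open Matrix BigOperators Finset

theorem stmt_9
    {X : Type*} [Fintype X] [Nonempty X] [DecidableEq X]
    (P : Matrix X X ℝ)
    (hP_nonneg : ∀ i j, 0 ≤ P i j)
    (hP_row : ∀ i, ∑ j, P i j = 1)
    (hP_prim : ∃ N : ℕ, 1 ≤ N ∧ ∀ i j, 0 < (P ^ N) i j)
    (pi : X → ℝ)
    (hpi_pos : ∀ i, 0 < pi i)
    (hpi_sum : ∑ i, pi i = 1)
    (hpi_stat : ∀ j, ∑ i, pi i * P i j = pi j)
    (PiM : Matrix X X ℝ)
    (hPiM : ∀ i j, PiM i j = pi j)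
    (F : Matrix X X ℝ)
    (hF1 : F * (1 - P + PiM) = 1)
    (hF2 : (1 - P + PiM) * F = 1)
    (Ω : X → X → ℝ)
    (hΩ : ∀ i j, Ω i j = F i i + F j j - F i j - F j i)
    (M K : Matrix X X ℝ)
    (hK : ∀ i, ∑ j, K i j = 1)
    (hsym : (M * (K - 1))ᵀ = M * (K - 1))
    : ∑ i, ∑ j, (M * (K - 1)) i j * Ω i j = 2 * (M * (1 - K) * F).trace := by
  set A := M * (K - 1) with hA
  have hs : ∀ i j, A i j = A j i := by
    intro i j
    have := congrFun (congrFun hsym j) i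
    simpa [Matrix.transpose_apply] using this
  have hrow : ∀ i, ∑ j, A i j = 0 := by
    intro i
    simp only [hA, Matrix.mul_apply]
    rw [Finset.sum_comm]
    have h1 : ∀ k, ∑ j, M i k * (K - 1) k j = 0 := by
      intro k
      rw [← Finset.mul_sum]
      have : ∑ j, (K - 1) k j = 0 := by
        simp [Matrix.sub_apply, Finset.sum_sub_distrib, hK k, Matrix.one_apply]
      rw [this, mul_zero]
    simpa using Finset.sum_congr rfl fun k _ => h1 k
  have hcol : ∀ j, ∑ i, A i j = 0 := by
    intro j
    calc ∑ i, A i j = ∑ i, A j i := Finset.sum_congr rfl fun i _ => hs i j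
      _ = 0 := hrow j
  have hMK : M * (1 - K) = -A := by
    rw [hA]
    have : (1 : Matrix X X ℝ) - K = -(K - 1) := (neg_sub K 1).symm
    rw [this, Matrix.mul_neg]
  have htr : (M * (1 - K) * F).trace = -(A * F).trace := by
    rw [hMK]; simp
  have htrAF : (A * F).trace = ∑ i, ∑ j, A i j * F j i := by
    simp [Matrix.trace, Matrix.diag, Matrix.mul_apply]
  have hT3 : (∑ i, ∑ j, A i j * F i j) = ∑ i, ∑ j, A i j * F j i := by
    rw [Finset.sum_comm]
    exact Finset.sum_congr rfl fun j _ => Finset.sum_congr rfl fun i _ => by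
      rw [hs i j]
  calc ∑ i, ∑ j, A i j * Ω i j
      = ∑ i, ∑ j, (A i j * F i i + A i j * F j j - A i j * F i j - A i j * F j i) := by
        refine Finset.sum_congr rfl fun i _ => Finset.sum_congr rfl fun j _ => ?_
        rw [hΩ i j]; ring
    _ = (∑ i, ∑ j, A i j * F i i) + (∑ i, ∑ j, A i j * F j j)
        - (∑ i, ∑ j, A i j * F i j) - (∑ i, ∑ j, A i j * F j i) := by
        simp [Finset.sum_sub_distrib, Finset.sum_add_distrib]
    _ = 0 + 0 - (∑ i, ∑ j, A i j * F j i) - (∑ i, ∑ j, A i j * F j i) := by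
        rw [hT3]
        congr 2
        · congr 1
          · refine Finset.sum_eq_zero fun i _ => ?_
            rw [← Finset.sum_mul, hrow i, zero_mul]
          · rw [Finset.sum_comm]
            refine Finset.sum_eq_zero fun j _ => ?_
            rw [← Finset.sum_mul, hcol j, zero_mul]
    _ = 2 * (M * (1 - K) * F).trace := by
        rw [htr, htrAF]; ring
end

section
/- (Kirchhoff index.) Let P be a primitive stochastic matrix on a finite nonempty state space X with stationary distribution π, F the fundamental matrix, Ω the resistance distance, and h the mean hitting times of the chain. Then Σ_{i,j ∈ X} Ω_{i,j} = 2 · |X| · t^{av}, where t^{av} := Σ_{i,j ∈ X} π_i π_j h(i,j) is the average hitting time of the chain. -/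
/-!
Summing `Ω` gives `2 (|X| tr F - ∑ F i j) = 2 |X| (tr F - 1)`, because `F` inverts
`1 - P + Π`, whose rows sum to `1`, so the rows of `F` sum to `1` as well.

For the hitting times, Kac's formula `π j (1 + ∑ k, P j k h k j) = 1` turns the recurrence into
the matrix identity `(1 - P) H = J - diag (1 / π)`, with `H = (h i j)` and `J` the all-ones
matrix. Since `F Π = Π`, we have `F (1 - P) = 1 - Π`,
and multiplying the identity by `F` gives `h m j - ∑ k, π k h k j = 1 - F m j / π j`. At `m = j`
this reads `∑ k, π k h k j = F j j / π j - 1`, hence `t^av = tr F - 1`.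
-/

open Matrix BigOperators Finset

namespace MarkovChain

section MatrixFacts

variable {X R : Type*} [Fintype X] [CommRing R]

theorem sum_sum_resistance_eq (F : Matrix X X R) :
    ∑ i, ∑ j, (F i i + F j j - F i j - F j i)
      = 2 * (Fintype.card X * trace F - ∑ i, ∑ j, F i j) := by
  simp only [sum_sub_distrib, sum_add_distrib, sum_const, card_univ, nsmul_eq_mul, trace,
    diag_apply, ← mul_sum]
  rw [sum_comm (f := fun i j => F j i)]
  ring

theorem mul_eq_self_of_sum_row_eq_one {F Q : Matrix X X R} (hF : ∀ i, ∑ j, F i j = 1)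
    {q : X → R} (hQ : ∀ i j, Q i j = q j) : F * Q = Q := by
  ext i j
  simp only [mul_apply, hQ, ← sum_mul, hF, one_mul]

variable [DecidableEq X]

theorem sum_row_eq_one_of_mul_eq_one {F M : Matrix X X R} (hFM : F * M = 1)
    (hM : ∀ i, ∑ j, M i j = 1) (i : X) : ∑ j, F i j = 1 := by
  calc ∑ j, F i j = ∑ j, F i j * ∑ k, M j k := by simp only [hM, mul_one]
    _ = ∑ k, (F * M) i k := by simp only [mul_apply, mul_sum]; exact sum_comm
    _ = 1 := by simp [hFM, one_apply]

end MatrixFacts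

section HittingTimes

variable {X : Type*} [Fintype X] {P : Matrix X X ℝ} {pi : X → ℝ} {h : X → X → ℝ}

theorem sum_sum_pi_mul_pi_mul_hitting {F : Matrix X X ℝ} (hpi_sum : ∑ i, pi i = 1)
    (hpi_ne : ∀ j, pi j ≠ 0) (hmean : ∀ j, ∑ k, pi k * h k j = F j j / pi j - 1) :
    ∑ i, ∑ j, pi i * pi j * h i j = trace F - 1 := by
  calc ∑ i, ∑ j, pi i * pi j * h i j = ∑ j, pi j * ∑ i, pi i * h i j := by
        rw [sum_comm]
        refine sum_congr rfl fun j _ => ?_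
        rw [mul_sum]
        exact sum_congr rfl fun i _ => by ring
    _ = ∑ j, (F j j - pi j) := by
        refine sum_congr rfl fun j _ => ?_
        rw [hmean, mul_sub, mul_div_cancel₀ _ (hpi_ne j), mul_one]
    _ = trace F - 1 := by rw [sum_sub_distrib, hpi_sum]; rfl

variable [DecidableEq X]

theorem kac_formula (hpi_sum : ∑ i, pi i = 1) (hpi_stat : ∀ j, ∑ i, pi i * P i j = pi j)
    (hdiag : ∀ j, h j j = 0) (hrec : ∀ i j, i ≠ j → h i j = 1 + ∑ k, P i k * h k j) (j : X) :
    pi j * (1 + ∑ k, P j k * h k j) = 1 := by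
  have hstat : ∑ i, pi i * (1 + ∑ k, P i k * h k j) = 1 + ∑ k, pi k * h k j := by
    simp only [mul_add, mul_one, mul_sum, sum_add_distrib, hpi_sum, ← mul_assoc]
    rw [sum_comm]
    simp only [← sum_mul, hpi_stat]
  have hsplit : ∑ i, pi i * h i j
      = ∑ i, pi i * (1 + ∑ k, P i k * h k j) - pi j * (1 + ∑ k, P j k * h k j) := by
    rw [← add_sum_erase _ _ (mem_univ j), ← add_sum_erase _ _ (mem_univ j), hdiag,
      sum_congr rfl fun i hi => by rw [hrec i j (ne_of_mem_erase hi)]]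
    ring
  linarith

theorem one_sub_mul_hitting (hkac : ∀ j, pi j * (1 + ∑ k, P j k * h k j) = 1)
    (hdiag : ∀ j, h j j = 0) (hrec : ∀ i j, i ≠ j → h i j = 1 + ∑ k, P i k * h k j) :
    (1 - P) * of h = of fun i j => 1 - if i = j then (pi j)⁻¹ else 0 := by
  rw [Matrix.sub_mul, Matrix.one_mul]
  ext i j
  simp only [Matrix.sub_apply, of_apply, mul_apply]
  split_ifs with hij
  · subst hij
    have := eq_inv_of_mul_eq_one_right (hkac i)
    linarith [hdiag i]
  · rw [hrec i j hij]; ring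

theorem sum_pi_mul_hitting {F PiM : Matrix X X ℝ} (hF : F * (1 - P + PiM) = 1)
    (hF_row : ∀ i, ∑ j, F i j = 1) (hPiM : ∀ i j, PiM i j = pi j)
    (hstep : (1 - P) * of h = of fun i j => 1 - if i = j then (pi j)⁻¹ else 0)
    (hdiag : ∀ j, h j j = 0) (j : X) :
    ∑ k, pi k * h k j = F j j / pi j - 1 := by
  have hFP : F * (1 - P) = 1 - PiM := by
    rw [← mul_eq_self_of_sum_row_eq_one hF_row hPiM, eq_sub_iff_add_eq, ← Matrix.mul_add, hF]
  have hkey : (1 - PiM) * of h = F * of fun i j => 1 - if i = j then (pi j)⁻¹ else 0 := by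
    rw [← hFP, Matrix.mul_assoc, hstep]
  have hjj := congr_fun₂ hkey j j
  simp only [Matrix.sub_apply, of_apply, mul_apply, one_apply, hPiM, sub_mul, ite_mul, one_mul,
    zero_mul, sum_ite_eq, mem_univ, if_true, hdiag, mul_sub, mul_one, sum_sub_distrib, hF_row,
    mul_ite, mul_zero, sum_ite_eq'] at hjj
  rw [div_eq_mul_inv]
  linarith

end HittingTimes

end MarkovChain

open MarkovChain in
theorem stmt_10_general
    {X : Type*} [Fintype X] [DecidableEq X]
    (P : Matrix X X ℝ)
    (hP_row : ∀ i, ∑ j, P i j = 1)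
    (pi : X → ℝ)
    (hpi_sum : ∑ i, pi i = 1)
    (hpi_stat : ∀ j, ∑ i, pi i * P i j = pi j)
    (PiM : Matrix X X ℝ)
    (hPiM : ∀ i j, PiM i j = pi j)
    (F : Matrix X X ℝ)
    (hF1 : F * (1 - P + PiM) = 1)
    (Ω : X → X → ℝ)
    (hΩ : ∀ i j, Ω i j = F i i + F j j - F i j - F j i)
    (h : X → X → ℝ)
    (hdiag : ∀ j, h j j = 0)
    (hrec : ∀ i j, i ≠ j → h i j = 1 + ∑ k, P i k * h k j)
    : ∑ i, ∑ j, Ω i j = 2 * (Fintype.card X : ℝ) * (∑ i, ∑ j, pi i * pi j * h i j) := by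
  have hM_row : ∀ i, ∑ j, (1 - P + PiM) i j = 1 := fun i => by
    simp [sum_add_distrib, sum_sub_distrib, one_apply, hP_row, hPiM, hpi_sum]
  have hF_row := sum_row_eq_one_of_mul_eq_one hF1 hM_row
  have hkac := kac_formula hpi_sum hpi_stat hdiag hrec
  have hpi_ne j : pi j ≠ 0 := left_ne_zero_of_mul_eq_one (hkac j)
  have hmean := sum_pi_mul_hitting hF1 hF_row hPiM (one_sub_mul_hitting hkac hdiag hrec) hdiag
  simp only [hΩ, sum_sum_resistance_eq, sum_sum_pi_mul_pi_mul_hitting hpi_sum hpi_ne hmean,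
    hF_row, sum_const, card_univ, nsmul_eq_mul, mul_one]
  ring

theorem stmt_10
    {X : Type*} [Fintype X] [Nonempty X] [DecidableEq X]
    (P : Matrix X X ℝ)
    (hP_nonneg : ∀ i j, 0 ≤ P i j)
    (hP_row : ∀ i, ∑ j, P i j = 1)
    (hP_prim : ∃ N : ℕ, 1 ≤ N ∧ ∀ i j, 0 < (P ^ N) i j)
    (pi : X → ℝ)
    (hpi_pos : ∀ i, 0 < pi i)
    (hpi_sum : ∑ i, pi i = 1)
    (hpi_stat : ∀ j, ∑ i, pi i * P i j = pi j)
    (PiM : Matrix X X ℝ)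
    (hPiM : ∀ i j, PiM i j = pi j)
    (F : Matrix X X ℝ)
    (hF1 : F * (1 - P + PiM) = 1)
    (hF2 : (1 - P + PiM) * F = 1)
    (Ω : X → X → ℝ)
    (hΩ : ∀ i j, Ω i j = F i i + F j j - F i j - F j i)
    (h : X → X → ℝ)
    (hdiag : ∀ j, h j j = 0)
    (hrec : ∀ i j, i ≠ j → h i j = 1 + ∑ k, P i k * h k j)
    : ∑ i, ∑ j, Ω i j = 2 * (Fintype.card X : ℝ) * (∑ i, ∑ j, pi i * pi j * h i j) :=
  stmt_10_general P hP_row pi hpi_sum hpi_stat PiM hPiM F hF1 Ω hΩ h hdiag hrec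
end

section
/- (Multiplicative Kirchhoff index.) Let P be a primitive stochastic matrix on a finite nonempty state space X with stationary distribution π, F the fundamental matrix, and Ω the resistance distance. Let M be the diagonal matrix with M_{i,i} = π_i. Then Σ_{i,j ∈ X} π_i π_j Ω_{i,j} = 2 · Tr(MF − MΠ); equivalently, Σ_{i,j ∈ X} π_i π_j Ω_{i,j} = 2 (Σ_i π_i F_{i,i} − Σ_i π_i²). -/
/-!
Write `Q = 1 - P + Π`. Since `π P = π` and `π Π = π`, also `π Q = π`, hence `π F = π Q F = π`.
Expanding `Ω`, the weighted sum `∑ π_i π_j Ω_{ij}` splits into two diagonal terms, each equal to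
`∑ π_i F_{ii}`, and two off-diagonal terms, each equal to `(π F) ⬝ π = ∑ π_i²`.
-/

open Matrix BigOperators Finset

namespace Matrix

variable {m n R : Type*} [Fintype m]

theorem vecMul_eq_of_forall_apply_eq [Semiring R] {w : m → R} {v : n → R} {A : Matrix m n R}
    (hA : ∀ i j, A i j = v j) (hw : ∑ i, w i = 1) : w ᵥ* A = v := by
  ext j
  simp only [vecMul, dotProduct, hA, ← sum_mul, hw, one_mul]

theorem vecMul_one_sub_add [Ring R] [DecidableEq m] {w : m → R} {P E : Matrix m m R}
    (hP : w ᵥ* P = w) (hE : w ᵥ* E = w) : w ᵥ* (1 - P + E) = w := by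
  rw [vecMul_add, vecMul_sub, vecMul_one, hP, hE, sub_self, zero_add]

theorem vecMul_eq_self_of_mul_eq_one [Semiring R] [DecidableEq m] {w : m → R}
    {Q F : Matrix m m R} (hQ : w ᵥ* Q = w) (hQF : Q * F = 1) : w ᵥ* F = w := by
  rw [← hQ, vecMul_vecMul, hQF, vecMul_one, hQ]

theorem trace_diagonal_mul [Semiring R] [DecidableEq m] (d : m → R) (A : Matrix m m R) :
    (diagonal d * A).trace = ∑ i, d i * A i i := by
  simp only [trace, diag, diagonal_mul]

def resistance [Ring R] (F : Matrix m m R) (i j : m) : R := F i i + F j j - F i j - F j i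

theorem sum_sum_mul_mul_resistance [CommRing R] (w : m → R) (F : Matrix m m R) :
    ∑ i, ∑ j, w i * w j * resistance F i j
      = 2 * ((∑ i, w i) * (∑ i, w i * F i i) - w ᵥ* F ⬝ᵥ w) := by
  set g : m → m → R := fun i j => w i * w j * (F i i - F i j)
  calc ∑ i, ∑ j, w i * w j * resistance F i j
      = ∑ i, ∑ j, (g i j + g j i) := by simp only [g, resistance]; congr! 2; ring
    _ = 2 * ∑ i, ∑ j, g i j := by
      simp only [sum_add_distrib]; rw [sum_comm (f := fun i j => g j i)]; ring
    _ = _ := by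
      congr 1
      simp only [g, vecMul, dotProduct, mul_sub, sum_sub_distrib, sum_mul, mul_sum]
      congr 1
      · congr! 2; ring
      · rw [sum_comm]; congr! 2; ring

end Matrix

theorem stmt_12_general
    {X : Type*} [Fintype X] [DecidableEq X]
    (P : Matrix X X ℝ)
    (pi : X → ℝ)
    (hpi_sum : ∑ i, pi i = 1)
    (hpi_stat : ∀ j, ∑ i, pi i * P i j = pi j)
    (PiM : Matrix X X ℝ)
    (hPiM : ∀ i j, PiM i j = pi j)
    (F : Matrix X X ℝ)
    (hF2 : (1 - P + PiM) * F = 1)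
    (Ω : X → X → ℝ)
    (hΩ : ∀ i j, Ω i j = F i i + F j j - F i j - F j i)
    : ∑ i, ∑ j, pi i * pi j * Ω i j
        = 2 * ((Matrix.diagonal pi) * F - (Matrix.diagonal pi) * PiM).trace ∧
      ∑ i, ∑ j, pi i * pi j * Ω i j
        = 2 * ((∑ i, pi i * F i i) - ∑ i, (pi i) ^ 2) := by
  have hpiP : pi ᵥ* P = pi := funext hpi_stat
  have hpiPiM : pi ᵥ* PiM = pi := vecMul_eq_of_forall_apply_eq hPiM hpi_sum
  have hpiF : pi ᵥ* F = pi := vecMul_eq_self_of_mul_eq_one (vecMul_one_sub_add hpiP hpiPiM) hF2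
  have hsum : ∑ i, ∑ j, pi i * pi j * Ω i j = 2 * ((∑ i, pi i * F i i) - ∑ i, pi i ^ 2) := by
    have hΩF : Ω = resistance F := funext₂ hΩ
    simp only [hΩF, sum_sum_mul_mul_resistance, hpiF, hpi_sum, one_mul, dotProduct, sq]
  refine ⟨?_, hsum⟩
  simp only [hsum, trace_sub, trace_diagonal_mul, hPiM, sq]

theorem stmt_12
    {X : Type*} [Fintype X] [Nonempty X] [DecidableEq X]
    (P : Matrix X X ℝ)
    (hP_nonneg : ∀ i j, 0 ≤ P i j)
    (hP_row : ∀ i, ∑ j, P i j = 1)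
    (hP_prim : ∃ N : ℕ, 1 ≤ N ∧ ∀ i j, 0 < (P ^ N) i j)
    (pi : X → ℝ)
    (hpi_pos : ∀ i, 0 < pi i)
    (hpi_sum : ∑ i, pi i = 1)
    (hpi_stat : ∀ j, ∑ i, pi i * P i j = pi j)
    (PiM : Matrix X X ℝ)
    (hPiM : ∀ i j, PiM i j = pi j)
    (F : Matrix X X ℝ)
    (hF1 : F * (1 - P + PiM) = 1)
    (hF2 : (1 - P + PiM) * F = 1)
    (Ω : X → X → ℝ)
    (hΩ : ∀ i j, Ω i j = F i i + F j j - F i j - F j i)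
    : ∑ i, ∑ j, pi i * pi j * Ω i j
        = 2 * ((Matrix.diagonal pi) * F - (Matrix.diagonal pi) * PiM).trace ∧
      ∑ i, ∑ j, pi i * pi j * Ω i j
        = 2 * ((∑ i, pi i * F i i) - ∑ i, (pi i) ^ 2) :=
  stmt_12_general P pi hpi_sum hpi_stat PiM hPiM F hF2 Ω hΩ
end

section
/- (Additive Kirchhoff index bounds.) Let P be a primitive stochastic matrix on a finite nonempty state space X with stationary distribution π, F the fundamental matrix, Ω the resistance distance, and h the mean hitting times of the chain, and set t^{av} := Σ_{i,j ∈ X} π_i π_j h(i,j). Then 2 t^{av} ≤ Σ_{i,j ∈ X} (π_i + π_j) Ω_{i,j} ≤ 2 t^{av} (|X| + 1). -/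
set_option linter.unusedSectionVars false
set_option maxHeartbeats 1000000

open Matrix BigOperators Finset

section aux
variable {X : Type*} [Fintype X] [Nonempty X] [DecidableEq X]

lemma pow_entry_nonneg (P : Matrix X X ℝ) (hP : ∀ i j, 0 ≤ P i j) :
    ∀ (n : ℕ) (i k : X), 0 ≤ (P ^ n) i k := by
  intro n
  induction n with
  | zero =>
      intro i k
      rw [pow_zero]
      rw [Matrix.one_apply]
      split <;> norm_num
  | succ n ih =>
      intro i k
      rw [pow_succ, Matrix.mul_apply]
      exact Finset.sum_nonneg fun l _ => mul_nonneg (ih i l) (hP l k)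

lemma liouville_le (P : Matrix X X ℝ)
    (hP_nonneg : ∀ i j, 0 ≤ P i j)
    (hP_row : ∀ i, ∑ j, P i j = 1)
    (hP_prim : ∃ N : ℕ, 1 ≤ N ∧ ∀ i j, 0 < (P ^ N) i j)
    (j : X) (v : X → ℝ) (hvj : v j = 0)
    (hrec : ∀ i, i ≠ j → v i = ∑ k, P i k * v k) :
    ∀ i, v i ≤ 0 := by
  obtain ⟨b, -, hb⟩ := Finset.exists_max_image Finset.univ v Finset.univ_nonempty
  have hb' : ∀ a, v a ≤ v b := fun a => hb a (Finset.mem_univ a)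
  by_contra hcon
  push_neg at hcon
  obtain ⟨i0, hi0⟩ := hcon
  have hm : 0 < v b := lt_of_lt_of_le hi0 (hb' i0)
  have succ : ∀ i, v i = v b → ∀ l, 0 < P i l → v l = v b := by
    intro i hi l hl
    have hij : i ≠ j := by rintro rfl; rw [hvj] at hi; linarith
    have hsum : ∑ k, P i k * (v b - v k) = 0 := by
      have e1 : ∑ k, P i k * (v b - v k)
          = (∑ k, P i k) * v b - ∑ k, P i k * v k := by
        rw [Finset.sum_mul]
        rw [← Finset.sum_sub_distrib]
        exact Finset.sum_congr rfl fun k _ => by ring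
      rw [e1, hP_row, one_mul, ← hrec i hij, hi, sub_self]
    have hterms := (Finset.sum_eq_zero_iff_of_nonneg
      (fun k _ => mul_nonneg (hP_nonneg i k) (sub_nonneg.2 (hb' k)))).1 hsum
    have := hterms l (Finset.mem_univ l)
    rcases mul_eq_zero.1 this with h1 | h2
    · exact absurd h1 (ne_of_gt hl)
    · linarith [sub_eq_zero.1 h2]
  have key : ∀ n : ℕ, ∀ i, v i = v b → ∀ k, 0 < (P ^ n) i k → v k = v b := by
    intro n
    induction n with
    | zero =>
        intro i hi k hk
        rw [pow_zero, Matrix.one_apply] at hk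
        rcases eq_or_ne i k with rfl | hne
        · exact hi
        · simp [hne] at hk
    | succ n ih =>
        intro i hi k hk
        rw [pow_succ', Matrix.mul_apply] at hk
        obtain ⟨l, -, hl⟩ := Finset.exists_ne_zero_of_sum_ne_zero (ne_of_gt hk)
        have hPl : 0 < P i l := lt_of_le_of_ne (hP_nonneg i l)
          (fun hc => hl (by rw [← hc, zero_mul]))
        have hPn : 0 < (P ^ n) l k := lt_of_le_of_ne (pow_entry_nonneg P hP_nonneg n l k)
          (fun hc => hl (by rw [← hc, mul_zero]))
        exact ih l (succ i hi l hPl) k hPn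
  obtain ⟨N, -, hNpos⟩ := hP_prim
  have := key N b rfl j (hNpos b j)
  rw [hvj] at this
  linarith

lemma liouville_zero (P : Matrix X X ℝ)
    (hP_nonneg : ∀ i j, 0 ≤ P i j)
    (hP_row : ∀ i, ∑ j, P i j = 1)
    (hP_prim : ∃ N : ℕ, 1 ≤ N ∧ ∀ i j, 0 < (P ^ N) i j)
    (j : X) (v : X → ℝ) (hvj : v j = 0)
    (hrec : ∀ i, i ≠ j → v i = ∑ k, P i k * v k) :
    ∀ i, v i = 0 := by
  intro i
  have h1 := liouville_le P hP_nonneg hP_row hP_prim j v hvj hrec i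
  have h2 := liouville_le P hP_nonneg hP_row hP_prim j (fun k => -v k)
    (by simp [hvj]) (by
      intro i hij
      rw [show ∑ k, P i k * -v k = -∑ k, P i k * v k by
        rw [← Finset.sum_neg_distrib]; exact Finset.sum_congr rfl fun k _ => by ring]
      rw [← hrec i hij]) i
  simp at h2
  linarith

end aux


open Matrix BigOperators Finset

theorem stmt_13
    {X : Type*} [Fintype X] [Nonempty X] [DecidableEq X]
    (P : Matrix X X ℝ)
    (hP_nonneg : ∀ i j, 0 ≤ P i j)
    (hP_row : ∀ i, ∑ j, P i j = 1)
    (hP_prim : ∃ N : ℕ, 1 ≤ N ∧ ∀ i j, 0 < (P ^ N) i j)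
    (pi : X → ℝ)
    (hpi_pos : ∀ i, 0 < pi i)
    (hpi_sum : ∑ i, pi i = 1)
    (hpi_stat : ∀ j, ∑ i, pi i * P i j = pi j)
    (PiM : Matrix X X ℝ)
    (hPiM : ∀ i j, PiM i j = pi j)
    (F : Matrix X X ℝ)
    (hF1 : F * (1 - P + PiM) = 1)
    (hF2 : (1 - P + PiM) * F = 1)
    (Ω : X → X → ℝ)
    (hΩ : ∀ i j, Ω i j = F i i + F j j - F i j - F j i)
    (h : X → X → ℝ)
    (hdiag : ∀ j, h j j = 0)
    (hrec : ∀ i j, i ≠ j → h i j = 1 + ∑ k, P i k * h k j)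
    : 2 * (∑ i, ∑ j, pi i * pi j * h i j)
        ≤ ∑ i, ∑ j, (pi i + pi j) * Ω i j ∧
      ∑ i, ∑ j, (pi i + pi j) * Ω i j
        ≤ 2 * (∑ i, ∑ j, pi i * pi j * h i j) * ((Fintype.card X : ℝ) + 1) := by
  -- h is nonnegative
  have h_nonneg : ∀ i j, 0 ≤ h i j := by
    intro i j
    obtain ⟨b, -, hb⟩ := Finset.exists_min_image Finset.univ (fun i => h i j)
      Finset.univ_nonempty
    have hb' : ∀ a, h b j ≤ h a j := fun a => hb a (Finset.mem_univ a)
    suffices hs : 0 ≤ h b j by linarith [hb' i]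
    by_contra hneg
    push_neg at hneg
    have hbj : b ≠ j := by rintro rfl; rw [hdiag] at hneg; linarith
    have ha : h b j = 1 + ∑ k, P b k * h k j := hrec b j hbj
    have hge : ∑ k, P b k * h b j ≤ ∑ k, P b k * h k j :=
      Finset.sum_le_sum fun k _ => mul_le_mul_of_nonneg_left (hb' k) (hP_nonneg b k)
    rw [← Finset.sum_mul, hP_row, one_mul] at hge
    linarith
  -- entrywise versions of hF2 and hF1
  have hF2e : ∀ i j, F i j - (∑ k, P i k * F k j) + (∑ k, pi k * F k j)
      = (if i = j then (1:ℝ) else 0) := by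
    intro i j
    have h0 : ((1 - P + PiM) * F) i j = (1 : Matrix X X ℝ) i j := by rw [hF2]
    rw [Matrix.add_mul, Matrix.sub_mul, Matrix.one_mul] at h0
    simpa [Matrix.add_apply, Matrix.sub_apply, Matrix.mul_apply, Matrix.one_apply,
      hPiM] using h0
  have hF1e : ∀ i j, F i j - (∑ k, F i k * P k j) + (∑ k, F i k * pi j)
      = (if i = j then (1:ℝ) else 0) := by
    intro i j
    have h0 : (F * (1 - P + PiM)) i j = (1 : Matrix X X ℝ) i j := by rw [hF1]
    rw [Matrix.mul_add, Matrix.mul_sub, Matrix.mul_one] at h0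
    simpa [Matrix.add_apply, Matrix.sub_apply, Matrix.mul_apply, Matrix.one_apply,
      hPiM] using h0
  -- pi F = pi
  have hPiF : ∀ j, ∑ k, pi k * F k j = pi j := by
    intro j
    have hs : ∑ i, pi i * (F i j - (∑ k, P i k * F k j) + (∑ k, pi k * F k j))
        = ∑ i, pi i * (if i = j then (1:ℝ) else 0) := by
      exact Finset.sum_congr rfl fun i _ => by rw [hF2e i j]
    have hrhs : ∑ i, pi i * (if i = j then (1:ℝ) else 0) = pi j := by
      simp
    have h2 : ∑ i, pi i * (∑ k, P i k * F k j) = ∑ k, pi k * F k j := by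
      simp only [Finset.mul_sum]
      rw [Finset.sum_comm]
      refine Finset.sum_congr rfl fun k _ => ?_
      rw [show ∑ i, pi i * (P i k * F k j) = (∑ i, pi i * P i k) * F k j by
        rw [Finset.sum_mul]; exact Finset.sum_congr rfl fun i _ => by ring]
      rw [hpi_stat]
    simp only [mul_sub, mul_add, Finset.sum_add_distrib, Finset.sum_sub_distrib] at hs
    rw [h2, hrhs] at hs
    have h3 : ∑ i, pi i * (∑ k, pi k * F k j) = ∑ k, pi k * F k j := by
      rw [← Finset.sum_mul, hpi_sum, one_mul]
    rw [h3] at hs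
    linarith
  -- row sums of F are 1
  have hFrow : ∀ i, ∑ j, F i j = 1 := by
    intro i
    have hs : ∑ j, (F i j - (∑ k, F i k * P k j) + (∑ k, F i k * pi j))
        = ∑ j, (if i = j then (1:ℝ) else 0) := by
      exact Finset.sum_congr rfl fun j _ => by rw [hF1e i j]
    have hrhs : ∑ j, (if i = j then (1:ℝ) else 0) = 1 := by simp
    simp only [Finset.sum_add_distrib, Finset.sum_sub_distrib] at hs
    rw [hrhs] at hs
    have h2 : ∑ j, ∑ k, F i k * P k j = ∑ j, F i j := by
      rw [Finset.sum_comm]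
      refine Finset.sum_congr rfl fun k _ => ?_
      rw [← Finset.mul_sum, hP_row, mul_one]
    have h3 : ∑ j, ∑ k, F i k * pi j = ∑ j, F i j := by
      rw [Finset.sum_comm]
      rw [show ∑ k, ∑ j, F i k * pi j = ∑ k, F i k by
        refine Finset.sum_congr rfl fun k _ => ?_
        rw [← Finset.mul_sum, hpi_sum, mul_one]]
    rw [h2, h3] at hs
    linarith
  -- key identity: pi j * h i j = F j j - F i j
  have hkey : ∀ i j, pi j * h i j = F j j - F i j := by
    intro i j
    have := liouville_zero P hP_nonneg hP_row hP_prim j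
      (fun i => pi j * h i j - (F j j - F i j))
      (by simp [hdiag])
      (by
        intro i hij
        have hF : F i j = ∑ k, P i k * F k j - pi j := by
          have := hF2e i j
          rw [if_neg hij] at this
          rw [hPiF j] at this
          linarith
        rw [hrec i j hij, hF]
        rw [show ∑ k, P i k * (pi j * h k j - (F j j - F k j))
            = pi j * (∑ k, P i k * h k j) - (∑ k, P i k) * F j j
              + ∑ k, P i k * F k j by
          rw [Finset.mul_sum, Finset.sum_mul, ← Finset.sum_sub_distrib,
            ← Finset.sum_add_distrib]
          exact Finset.sum_congr rfl fun k _ => by ring]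
        rw [hP_row, one_mul]
        ring) i
    linarith
  -- Kemeny constant
  have kem : ∀ i, ∑ j, pi j * h i j = (∑ j, F j j) - 1 := by
    intro i
    rw [show ∑ j, pi j * h i j = ∑ j, (F j j - F i j) from
      Finset.sum_congr rfl fun j _ => by rw [hkey i j]]
    rw [Finset.sum_sub_distrib, hFrow i]
  have hT : ∑ i, ∑ j, pi i * pi j * h i j = (∑ j, F j j) - 1 := by
    have e : ∀ i, ∑ j, pi i * pi j * h i j = pi i * ((∑ j, F j j) - 1) := by
      intro i
      rw [← kem i, Finset.mul_sum]
      exact Finset.sum_congr rfl fun j _ => by ring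
    rw [Finset.sum_congr rfl fun i _ => e i, ← Finset.sum_mul, hpi_sum, one_mul]
  have hΩ' : ∀ i j, Ω i j = pi j * h i j + pi i * h j i := by
    intro i j
    rw [hΩ i j]
    have h1 := hkey i j
    have h2 := hkey j i
    linarith
  have hS : ∑ i, ∑ j, (pi i + pi j) * Ω i j
      = 2 * ((∑ i, ∑ j, pi i * pi j * h i j) + ∑ i, ∑ j, pi j * (pi j * h i j)) := by
    have e1 : ∑ i, ∑ j, (pi i + pi j) * Ω i j
        = ∑ i, ∑ j, (pi i + pi j) * (pi j * h i j)
          + ∑ i, ∑ j, (pi i + pi j) * (pi i * h j i) := by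
      rw [← Finset.sum_add_distrib]
      refine Finset.sum_congr rfl fun i _ => ?_
      rw [← Finset.sum_add_distrib]
      refine Finset.sum_congr rfl fun j _ => ?_
      rw [hΩ' i j]; ring
    have e2 : ∑ i, ∑ j, (pi i + pi j) * (pi i * h j i)
        = ∑ i, ∑ j, (pi i + pi j) * (pi j * h i j) := by
      rw [Finset.sum_comm]
      exact Finset.sum_congr rfl fun i _ => Finset.sum_congr rfl fun j _ => by ring
    have e3 : ∑ i, ∑ j, (pi i + pi j) * (pi j * h i j)
        = (∑ i, ∑ j, pi i * pi j * h i j) + ∑ i, ∑ j, pi j * (pi j * h i j) := by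
      rw [← Finset.sum_add_distrib]
      refine Finset.sum_congr rfl fun i _ => ?_
      rw [← Finset.sum_add_distrib]
      exact Finset.sum_congr rfl fun j _ => by ring
    rw [e1, e2, e3]; ring
  have hpile : ∀ j, pi j ≤ 1 := by
    intro j
    rw [← hpi_sum]
    exact Finset.single_le_sum (fun i _ => (hpi_pos i).le) (Finset.mem_univ j)
  have hU0 : 0 ≤ ∑ i, ∑ j, pi j * (pi j * h i j) :=
    Finset.sum_nonneg fun i _ => Finset.sum_nonneg fun j _ =>
      mul_nonneg (hpi_pos j).le (mul_nonneg (hpi_pos j).le (h_nonneg i j))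
  have hUle : ∑ i, ∑ j, pi j * (pi j * h i j)
      ≤ (Fintype.card X : ℝ) * ((∑ j, F j j) - 1) := by
    calc ∑ i, ∑ j, pi j * (pi j * h i j)
        ≤ ∑ i, ∑ j, pi j * h i j := by
          refine Finset.sum_le_sum fun i _ => Finset.sum_le_sum fun j _ => ?_
          calc pi j * (pi j * h i j)
              ≤ 1 * (pi j * h i j) := mul_le_mul_of_nonneg_right (hpile j)
                (mul_nonneg (hpi_pos j).le (h_nonneg i j))
            _ = pi j * h i j := one_mul _
      _ = (Fintype.card X : ℝ) * ((∑ j, F j j) - 1) := by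
          rw [Finset.sum_congr rfl fun i _ => kem i, Finset.sum_const,
            Finset.card_univ, nsmul_eq_mul]
  constructor
  · rw [hS, hT]
    linarith
  · rw [hS, hT]
    have hr : 2 * ((∑ j, F j j) - 1) * ((Fintype.card X : ℝ) + 1)
        = 2 * ((∑ j, F j j) - 1)
          + 2 * ((Fintype.card X : ℝ) * ((∑ j, F j j) - 1)) := by ring
    linarith
end

section
/- (Sum rule for reversible chains.) Let P be a primitive stochastic matrix on a finite nonempty state space X with stationary distribution π, F the fundamental matrix, and Ω the resistance distance. Suppose P is reversible, i.e. π_i P_{i,j} = π_j P_{j,i} for all i, j. Let M be the diagonal matrix with M_{i,i} = π_i. Then for every natural number m ≥ 1, Σ_{i,j ∈ X} π_j (P^m)_{j,i} Ω_{i,j} = 2 · Tr( M · Σ_{k=0}^{m−1} (P^k − Π) ). -/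
open Matrix BigOperators Finset

theorem stmt_16
    {X : Type*} [Fintype X] [Nonempty X] [DecidableEq X]
    (P : Matrix X X ℝ)
    (hP_nonneg : ∀ i j, 0 ≤ P i j)
    (hP_row : ∀ i, ∑ j, P i j = 1)
    (hP_prim : ∃ N : ℕ, 1 ≤ N ∧ ∀ i j, 0 < (P ^ N) i j)
    (pi : X → ℝ)
    (hpi_pos : ∀ i, 0 < pi i)
    (hpi_sum : ∑ i, pi i = 1)
    (hpi_stat : ∀ j, ∑ i, pi i * P i j = pi j)
    (PiM : Matrix X X ℝ)
    (hPiM : ∀ i j, PiM i j = pi j)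
    (F : Matrix X X ℝ)
    (hF1 : F * (1 - P + PiM) = 1)
    (hF2 : (1 - P + PiM) * F = 1)
    (Ω : X → X → ℝ)
    (hΩ : ∀ i j, Ω i j = F i i + F j j - F i j - F j i)
    (hrev : ∀ i j, pi i * P i j = pi j * P j i)
    : ∀ m : ℕ, 1 ≤ m →
      ∑ i, ∑ j, pi j * (P ^ m) j i * Ω i j
        = 2 * ((Matrix.diagonal pi) * (∑ k ∈ Finset.range m, (P ^ k - PiM))).trace := by
  intro m hm
  -- row sums of powers are 1
  have hrow : ∀ n : ℕ, ∀ j, ∑ i, (P ^ n) j i = 1 := by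
    intro n
    induction n with
    | zero => intro j; simp [Matrix.one_apply]
    | succ n ih =>
      intro j
      rw [pow_succ]
      simp only [Matrix.mul_apply]
      rw [Finset.sum_comm]
      calc ∑ k, ∑ i, (P ^ n) j k * P k i
          = ∑ k, (P ^ n) j k * ∑ i, P k i := by simp [Finset.mul_sum]
        _ = 1 := by simp [hP_row, ih j]
  -- pi is stationary for powers
  have hstat : ∀ n : ℕ, ∀ i, ∑ j, pi j * (P ^ n) j i = pi i := by
    intro n
    induction n with
    | zero => intro i; simp [Matrix.one_apply]
    | succ n ih =>
      intro i
      rw [pow_succ]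
      simp only [Matrix.mul_apply, Finset.mul_sum]
      rw [Finset.sum_comm]
      calc ∑ k, ∑ j, pi j * ((P ^ n) j k * P k i)
          = ∑ k, (∑ j, pi j * (P ^ n) j k) * P k i := by
            simp [Finset.sum_mul, mul_assoc]
        _ = ∑ k, pi k * P k i := by simp [ih]
        _ = pi i := hpi_stat i
  -- reversibility for powers
  have hrevn : ∀ n : ℕ, ∀ i j, pi j * (P ^ n) j i = pi i * (P ^ n) i j := by
    intro n
    induction n with
    | zero =>
      intro i j
      by_cases h : i = j
      · subst h; rfl
      · simp [Matrix.one_apply, h, Ne.symm h]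
    | succ n ih =>
      intro i j
      have key : pi j * (P ^ n * P) j i = pi i * (P * P ^ n) i j := by
        simp only [Matrix.mul_apply, Finset.mul_sum]
        apply Finset.sum_congr rfl
        intro k _
        have h1 : pi j * (P ^ n) j k = pi k * (P ^ n) k j := ih k j
        have h2 : pi k * P k i = pi i * P i k := hrev k i
        calc pi j * ((P ^ n) j k * P k i)
            = (pi j * (P ^ n) j k) * P k i := by ring
          _ = (pi k * (P ^ n) k j) * P k i := by rw [h1]
          _ = (pi k * P k i) * (P ^ n) k j := by ring
          _ = (pi i * P i k) * (P ^ n) k j := by rw [h2]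
          _ = pi i * (P i k * (P ^ n) k j) := by ring
      calc pi j * (P ^ (n + 1)) j i
          = pi j * (P ^ n * P) j i := by rw [pow_succ]
        _ = pi i * (P * P ^ n) i j := key
        _ = pi i * (P ^ (n + 1)) i j := by rw [← pow_succ']
  -- basic matrix identities
  have hPPi : P * PiM = PiM := by
    ext i j
    simp only [Matrix.mul_apply, hPiM]
    rw [← Finset.sum_mul, hP_row, one_mul]
  have hPiP : PiM * P = PiM := by
    ext i j
    simp only [Matrix.mul_apply, hPiM]
    exact hpi_stat j
  have hPiPi : PiM * PiM = PiM := by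
    ext i j
    simp only [Matrix.mul_apply, hPiM]
    rw [← Finset.sum_mul, hpi_sum, one_mul]
  have hPkPi : ∀ k : ℕ, P ^ k * PiM = PiM := by
    intro k
    induction k with
    | zero => simp
    | succ k ih => rw [pow_succ', mul_assoc, ih, hPPi]
  -- the key matrix identity
  have hterm : ∀ k : ℕ, (P ^ k - PiM) * (1 - P + PiM) = P ^ k - P ^ (k + 1) := by
    intro k
    have : (P ^ k - PiM) * (1 - P + PiM)
        = (P ^ k * 1 - P ^ k * P + P ^ k * PiM) - (PiM * 1 - PiM * P + PiM * PiM) := by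
      rw [sub_mul, mul_add, mul_add, mul_sub, mul_sub]
    rw [this, hPkPi, hPiP, hPiPi, mul_one, mul_one, ← pow_succ]
    abel
  have hS : (∑ k ∈ Finset.range m, (P ^ k - PiM)) = (1 - P ^ m) * F := by
    have h1 : (∑ k ∈ Finset.range m, (P ^ k - PiM)) * (1 - P + PiM) = 1 - P ^ m := by
      rw [Finset.sum_mul]
      have : ∀ k ∈ Finset.range m, (P ^ k - PiM) * (1 - P + PiM) = P ^ k - P ^ (k + 1) :=
        fun k _ => hterm k
      rw [Finset.sum_congr rfl this, Finset.sum_range_sub' (fun k => P ^ k), pow_zero]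
    calc (∑ k ∈ Finset.range m, (P ^ k - PiM))
        = (∑ k ∈ Finset.range m, (P ^ k - PiM)) * ((1 - P + PiM) * F) := by rw [hF2, mul_one]
      _ = ((∑ k ∈ Finset.range m, (P ^ k - PiM)) * (1 - P + PiM)) * F := by rw [mul_assoc]
      _ = (1 - P ^ m) * F := by rw [h1]
  -- compute the RHS trace
  have htr : ∀ A : Matrix X X ℝ, (Matrix.diagonal pi * A).trace = ∑ i, pi i * A i i := by
    intro A
    simp [Matrix.trace, Matrix.diag, Matrix.diagonal_mul]
  have hRHS : ((Matrix.diagonal pi) * (∑ k ∈ Finset.range m, (P ^ k - PiM))).trace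
      = (∑ i, pi i * F i i) - ∑ i, pi i * (P ^ m * F) i i := by
    rw [hS, htr]
    have : ∀ i : X, pi i * ((1 - P ^ m) * F) i i
        = pi i * F i i - pi i * (P ^ m * F) i i := by
      intro i
      have : ((1 - P ^ m) * F) i i = F i i - (P ^ m * F) i i := by
        rw [sub_mul, one_mul, Matrix.sub_apply]
      rw [this]; ring
    rw [Finset.sum_congr rfl (fun i _ => this i), Finset.sum_sub_distrib]
  -- expand the LHS
  have hexp : ∀ i j : X, pi j * (P ^ m) j i * Ω i j
      = (pi j * (P ^ m) j i * F i i + pi j * (P ^ m) j i * F j j)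
        - (pi j * (P ^ m) j i * F i j + pi i * (P ^ m) i j * F j i) := by
    intro i j
    rw [hΩ]
    have h := hrevn m i j
    linear_combination (-(F j i)) * h
  calc ∑ i, ∑ j, pi j * (P ^ m) j i * Ω i j
      = ∑ i, ∑ j, ((pi j * (P ^ m) j i * F i i + pi j * (P ^ m) j i * F j j)
          - (pi j * (P ^ m) j i * F i j + pi i * (P ^ m) i j * F j i)) := by
        exact Finset.sum_congr rfl fun i _ => Finset.sum_congr rfl fun j _ => hexp i j
    _ = ((∑ i, ∑ j, pi j * (P ^ m) j i * F i i) + ∑ i, ∑ j, pi j * (P ^ m) j i * F j j)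
          - ((∑ i, ∑ j, pi j * (P ^ m) j i * F i j) + ∑ i, ∑ j, pi i * (P ^ m) i j * F j i) := by
        simp [Finset.sum_sub_distrib, Finset.sum_add_distrib]
    _ = ((∑ i, pi i * F i i) + ∑ i, pi i * F i i)
          - ((∑ i, pi i * (P ^ m * F) i i) + ∑ i, pi i * (P ^ m * F) i i) := by
        congr 1
        · congr 1
          · apply Finset.sum_congr rfl
            intro i _
            rw [← Finset.sum_mul, hstat m i]
          · rw [Finset.sum_comm]
            apply Finset.sum_congr rfl
            intro j _
            calc ∑ i, pi j * (P ^ m) j i * F j j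
                = (pi j * F j j) * ∑ i, (P ^ m) j i := by
                  rw [Finset.mul_sum]; apply Finset.sum_congr rfl; intro i _; ring
              _ = pi j * F j j := by rw [hrow m j, mul_one]
        · congr 1
          · rw [Finset.sum_comm]
            apply Finset.sum_congr rfl
            intro j _
            rw [Matrix.mul_apply, Finset.mul_sum]
            apply Finset.sum_congr rfl
            intro i _
            ring
          · apply Finset.sum_congr rfl
            intro i _
            rw [Matrix.mul_apply, Finset.mul_sum]
            apply Finset.sum_congr rfl
            intro j _
            ring
    _ = 2 * ((∑ i, pi i * F i i) - ∑ i, pi i * (P ^ m * F) i i) := by ring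
    _ = 2 * ((Matrix.diagonal pi) * (∑ k ∈ Finset.range m, (P ^ k - PiM))).trace := by
        rw [hRHS]
end

section
/- (Markov chain analogue of Foster's first formula.) Let P be a primitive stochastic matrix on a finite nonempty state space X that is doubly stochastic and reversible (equivalently, P is symmetric), with stationary distribution π (necessarily the uniform distribution), F the fundamental matrix, and Ω the resistance distance. Then Σ_{i,j ∈ X} P_{i,j} Ω_{i,j} = 2 (|X| − 1). -/
open Matrix BigOperators Finset

theorem stmt_17
    {X : Type*} [Fintype X] [Nonempty X] [DecidableEq X]
    (P : Matrix X X ℝ)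
    (hP_nonneg : ∀ i j, 0 ≤ P i j)
    (hP_row : ∀ i, ∑ j, P i j = 1)
    (hP_prim : ∃ N : ℕ, 1 ≤ N ∧ ∀ i j, 0 < (P ^ N) i j)
    (pi : X → ℝ)
    (hpi_pos : ∀ i, 0 < pi i)
    (hpi_sum : ∑ i, pi i = 1)
    (hpi_stat : ∀ j, ∑ i, pi i * P i j = pi j)
    (PiM : Matrix X X ℝ)
    (hPiM : ∀ i j, PiM i j = pi j)
    (hP_col : ∀ j, ∑ i, P i j = 1)
    (F : Matrix X X ℝ)
    (hF1 : F * (1 - P + PiM) = 1)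
    (hF2 : (1 - P + PiM) * F = 1)
    (Ω : X → X → ℝ)
    (hΩ : ∀ i j, Ω i j = F i i + F j j - F i j - F j i)
    (hrev : ∀ i j, pi i * P i j = pi j * P j i)
    : ∑ i, ∑ j, P i j * Ω i j = 2 * ((Fintype.card X : ℝ) - 1) := by
  classical
  obtain ⟨N, hN1, hNpos⟩ := hP_prim
  -- stationarity for powers
  have hstatN : ∀ (M : ℕ) (j : X), ∑ i, pi i * (P ^ M) i j = pi j := by
    intro M
    induction M with
    | zero => intro j; simp [Matrix.one_apply, Finset.sum_ite_eq', mul_comm]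
    | succ M ih =>
      intro j
      have hms : (P ^ (M+1)) = (P ^ M) * P := pow_succ P M
      calc ∑ i, pi i * (P ^ (M+1)) i j
          = ∑ i, ∑ k, pi i * ((P ^ M) i k * P k j) := by
            simp [hms, Matrix.mul_apply, Finset.mul_sum]
        _ = ∑ k, (∑ i, pi i * (P ^ M) i k) * P k j := by
            rw [Finset.sum_comm]
            simp [Finset.sum_mul, mul_assoc]
        _ = ∑ k, pi k * P k j := by simp [ih]
        _ = pi j := hpi_stat j
  -- column sums of powers equal 1
  have hcolN : ∀ (M : ℕ) (j : X), ∑ i, (P ^ M) i j = 1 := by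
    intro M
    induction M with
    | zero => intro j; simp [Matrix.one_apply, Finset.sum_ite_eq']
    | succ M ih =>
      intro j
      have hms : (P ^ (M+1)) = (P ^ M) * P := pow_succ P M
      calc ∑ i, (P ^ (M+1)) i j
          = ∑ i, ∑ k, (P ^ M) i k * P k j := by simp [hms, Matrix.mul_apply]
        _ = ∑ k, (∑ i, (P ^ M) i k) * P k j := by
            rw [Finset.sum_comm]; simp [Finset.sum_mul]
        _ = ∑ k, P k j := by simp [ih]
        _ = 1 := hP_col j
  -- pi is constant
  obtain ⟨i0, -, hi0⟩ := Finset.exists_max_image (univ : Finset X) pi univ_nonempty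
  have hconst : ∀ i, pi i = pi i0 := by
    have hle : ∀ i ∈ (univ : Finset X), pi i * (P ^ N) i i0 ≤ pi i0 * (P ^ N) i i0 := by
      intro i _
      exact mul_le_mul_of_nonneg_right (hi0 i (mem_univ i)) (le_of_lt (hNpos i i0))
    have hsumeq : ∑ i, pi i * (P ^ N) i i0 = ∑ i, pi i0 * (P ^ N) i i0 := by
      rw [hstatN N i0, ← Finset.mul_sum, hcolN N i0, mul_one]
    have heach := (Finset.sum_eq_sum_iff_of_le hle).mp hsumeq
    intro i
    exact mul_right_cancel₀ (ne_of_gt (hNpos i i0)) (heach i (mem_univ i))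
  -- P is symmetric
  have hsym : ∀ i j, P i j = P j i := by
    intro i j
    have h := hrev i j
    rw [hconst i, hconst j] at h
    exact mul_left_cancel₀ (ne_of_gt (hpi_pos i0)) h
  -- row sums of F are 1
  have hFrow : ∀ i, ∑ k, F i k = 1 := by
    intro i
    have h : ∑ j, (F * (1 - P + PiM)) i j = ∑ j, (1 : Matrix X X ℝ) i j := by
      rw [hF1]
    have hrhs : ∑ j, (1 : Matrix X X ℝ) i j = 1 := by
      simp [Matrix.one_apply, Finset.sum_ite_eq']
    have hA : ∀ k, ∑ j, (1 - P + PiM) k j = 1 := by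
      intro k
      have : ∑ j, ((1 : Matrix X X ℝ) k j - P k j + PiM k j) = 1 := by
        rw [Finset.sum_add_distrib, Finset.sum_sub_distrib]
        simp [Matrix.one_apply, Finset.sum_ite_eq', hP_row, hPiM, hpi_sum]
      simpa [Matrix.sub_apply, Matrix.add_apply] using this
    have hlhs : ∑ j, (F * (1 - P + PiM)) i j = ∑ k, F i k := by
      simp only [Matrix.mul_apply]
      rw [Finset.sum_comm]
      calc ∑ k, ∑ j, F i k * (1 - P + PiM) k j
          = ∑ k, F i k * ∑ j, (1 - P + PiM) k j := by
            exact Finset.sum_congr rfl fun k _ => (Finset.mul_sum _ _ _).symm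
        _ = ∑ k, F i k := by
            refine Finset.sum_congr rfl fun k _ => ?_
            rw [hA k, mul_one]
    rw [hlhs, hrhs] at h
    exact h
  -- diagonal identity from hF1
  have hdiag : ∀ i, F i i - (∑ k, F i k * P k i) + pi i = 1 := by
    intro i
    have h := congrFun (congrFun hF1 i) i
    simp only [Matrix.mul_apply, Matrix.add_apply, Matrix.sub_apply, hPiM] at h
    have e : ∀ k ∈ (univ : Finset X),
        F i k * ((1 : Matrix X X ℝ) k i - P k i + pi i)
          = F i k * (1 : Matrix X X ℝ) k i - F i k * P k i + F i k * pi i :=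
      fun k _ => by ring
    rw [Finset.sum_congr rfl e, Finset.sum_add_distrib, Finset.sum_sub_distrib,
      ← Finset.sum_mul, hFrow i, one_mul] at h
    simpa [Matrix.one_apply, mul_ite, Finset.sum_ite_eq'] using h
  -- trace identity
  have htr : ∑ i, F i i - ∑ i, (∑ k, F i k * P k i) = (Fintype.card X : ℝ) - 1 := by
    have h : ∑ i, (F i i - (∑ k, F i k * P k i) + pi i) = ∑ _i : X, (1 : ℝ) := by
      exact Finset.sum_congr rfl fun i _ => by rw [hdiag i]
    rw [Finset.sum_add_distrib, Finset.sum_sub_distrib, hpi_sum] at h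
    simp only [Finset.sum_const, nsmul_eq_mul, mul_one, Finset.card_univ] at h
    linarith
  -- expand the main sum
  have hexp : ∑ i, ∑ j, P i j * Ω i j
      = 2 * (∑ i, F i i) - 2 * (∑ i, ∑ k, F i k * P k i) := by
    have e : ∀ i j, P i j * Ω i j
        = P i j * F i i + P i j * F j j - P i j * F i j - P i j * F j i := by
      intro i j; rw [hΩ]; ring
    calc ∑ i, ∑ j, P i j * Ω i j
        = ∑ i, ∑ j, (P i j * F i i + P i j * F j j - P i j * F i j - P i j * F j i) := by
          exact Finset.sum_congr rfl fun i _ => Finset.sum_congr rfl fun j _ => e i j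
      _ = (∑ i, ∑ j, P i j * F i i) + (∑ i, ∑ j, P i j * F j j)
          - (∑ i, ∑ j, P i j * F i j) - (∑ i, ∑ j, P i j * F j i) := by
          simp [Finset.sum_add_distrib, Finset.sum_sub_distrib]
      _ = 2 * (∑ i, F i i) - 2 * (∑ i, ∑ k, F i k * P k i) := by
          have t1 : (∑ i, ∑ j, P i j * F i i) = ∑ i, F i i := by
            refine Finset.sum_congr rfl fun i _ => ?_
            rw [← Finset.sum_mul, hP_row, one_mul]
          have t2 : (∑ i, ∑ j, P i j * F j j) = ∑ i, F i i := by
            rw [Finset.sum_comm]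
            refine Finset.sum_congr rfl fun j _ => ?_
            rw [← Finset.sum_mul, hP_col, one_mul]
          have t4 : (∑ i, ∑ j, P i j * F j i) = ∑ i, ∑ k, F i k * P k i := by
            rw [Finset.sum_comm]
            exact Finset.sum_congr rfl fun i _ =>
              Finset.sum_congr rfl fun k _ => mul_comm _ _
          have t3 : (∑ i, ∑ j, P i j * F i j) = ∑ i, ∑ k, F i k * P k i := by
            calc ∑ i, ∑ j, P i j * F i j
                = ∑ i, ∑ j, P j i * F i j := by
                  exact Finset.sum_congr rfl fun i _ =>
                    Finset.sum_congr rfl fun j _ => by rw [hsym i j]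
              _ = ∑ i, ∑ k, F i k * P k i := by
                  exact Finset.sum_congr rfl fun i _ =>
                    Finset.sum_congr rfl fun k _ => mul_comm _ _
          rw [t1, t2, t3, t4]; ring
  rw [hexp]
  rw [show (2 : ℝ) * (∑ i, F i i) - 2 * (∑ i, ∑ k, F i k * P k i)
      = 2 * ((∑ i, F i i) - ∑ i, (∑ k, F i k * P k i)) from by ring, htr]
end

section
/- Let P be a primitive stochastic matrix on the three-element state space X = {1, 2, 3} which is a birth–death chain: P_{1,3} = P_{3,1} = 0 and P_{1,2}, P_{2,1}, P_{2,3}, P_{3,2} are all strictly positive. Let π be its stationary distribution, F the fundamental matrix, Ω the resistance distance, and h the mean hitting times of the chain. Then Ω_{1,3} − Ω_{1,2} − Ω_{2,3} = (π_3 − π_2) h(1,2) + (π_1 − π_2) h(3,2). -/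
open Matrix BigOperators Finset

theorem stmt_18
    (P : Matrix (Fin 3) (Fin 3) ℝ)
    (hP_nonneg : ∀ i j, 0 ≤ P i j)
    (hP_row : ∀ i, ∑ j, P i j = 1)
    (hP_prim : ∃ N : ℕ, 1 ≤ N ∧ ∀ i j, 0 < (P ^ N) i j)
    (hP13 : P 0 2 = 0) (hP31 : P 2 0 = 0)
    (hP12 : 0 < P 0 1) (hP21 : 0 < P 1 0)
    (hP23 : 0 < P 1 2) (hP32 : 0 < P 2 1)
    (pi : Fin 3 → ℝ)
    (hpi_pos : ∀ i, 0 < pi i)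
    (hpi_sum : ∑ i, pi i = 1)
    (hpi_stat : ∀ j, ∑ i, pi i * P i j = pi j)
    (PiM : Matrix (Fin 3) (Fin 3) ℝ)
    (hPiM : ∀ i j, PiM i j = pi j)
    (F : Matrix (Fin 3) (Fin 3) ℝ)
    (hF1 : F * (1 - P + PiM) = 1)
    (hF2 : (1 - P + PiM) * F = 1)
    (Ω : Fin 3 → Fin 3 → ℝ)
    (hΩ : ∀ i j, Ω i j = F i i + F j j - F i j - F j i)
    (h : Fin 3 → Fin 3 → ℝ)
    (hdiag : ∀ j, h j j = 0)
    (hrec : ∀ i j, i ≠ j → h i j = 1 + ∑ k, P i k * h k j)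
    : Ω 0 2 - Ω 0 1 - Ω 1 2 = (pi 2 - pi 1) * h 0 1 + (pi 0 - pi 1) * h 2 1 := by
  have hE : ∀ i j : Fin 3,
      F i j - (P i 0 * F 0 j + P i 1 * F 1 j + P i 2 * F 2 j)
        + (pi 0 * F 0 j + pi 1 * F 1 j + pi 2 * F 2 j)
        = if i = j then 1 else 0 := by
    intro i j
    have hh := congrFun (congrFun hF2 i) j
    simp only [Matrix.mul_apply, Matrix.add_apply, Matrix.sub_apply, Matrix.one_apply,
      Fin.sum_univ_three, hPiM] at hh
    fin_cases i <;> simp at hh ⊢ <;> linarith [hh]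
  have hst : ∀ k : Fin 3, pi 0 * P 0 k + pi 1 * P 1 k + pi 2 * P 2 k = pi k := by
    intro k; simpa [Fin.sum_univ_three] using hpi_stat k
  have hsum : pi 0 + pi 1 + pi 2 = 1 := by simpa [Fin.sum_univ_three] using hpi_sum
  -- pi F = pi, per column
  have hS0 : pi 0 * F 0 0 + pi 1 * F 1 0 + pi 2 * F 2 0 = pi 0 := by
    have E0 := hE 0 0; have E1 := hE 1 0; have E2 := hE 2 0
    rw [if_pos rfl] at E0
    rw [if_neg (by decide)] at E1
    rw [if_neg (by decide)] at E2
    linear_combination pi 0 * E0 + pi 1 * E1 + pi 2 * E2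
      + F 0 0 * hst 0 + F 1 0 * hst 1 + F 2 0 * hst 2
      - (pi 0 * F 0 0 + pi 1 * F 1 0 + pi 2 * F 2 0) * hsum
  have hS1 : pi 0 * F 0 1 + pi 1 * F 1 1 + pi 2 * F 2 1 = pi 1 := by
    have E0 := hE 0 1; have E1 := hE 1 1; have E2 := hE 2 1
    rw [if_neg (by decide)] at E0
    rw [if_pos rfl] at E1
    rw [if_neg (by decide)] at E2
    linear_combination pi 0 * E0 + pi 1 * E1 + pi 2 * E2
      + F 0 1 * hst 0 + F 1 1 * hst 1 + F 2 1 * hst 2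
      - (pi 0 * F 0 1 + pi 1 * F 1 1 + pi 2 * F 2 1) * hsum
  have hS2 : pi 0 * F 0 2 + pi 1 * F 1 2 + pi 2 * F 2 2 = pi 2 := by
    have E0 := hE 0 2; have E1 := hE 1 2; have E2 := hE 2 2
    rw [if_neg (by decide)] at E0
    rw [if_neg (by decide)] at E1
    rw [if_pos rfl] at E2
    linear_combination pi 0 * E0 + pi 1 * E1 + pi 2 * E2
      + F 0 2 * hst 0 + F 1 2 * hst 1 + F 2 2 * hst 2
      - (pi 0 * F 0 2 + pi 1 * F 1 2 + pi 2 * F 2 2) * hsum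
  -- row sums
  have r0 : P 0 0 + P 0 1 + P 0 2 = 1 := by simpa [Fin.sum_univ_three] using hP_row 0
  have r2 : P 2 0 + P 2 1 + P 2 2 = 1 := by simpa [Fin.sum_univ_three] using hP_row 2
  -- key column difference relations
  have eA : P 0 1 * (F 1 1 - F 0 1) = pi 1 := by
    have E0 := hE 0 1; rw [if_neg (by decide)] at E0
    linear_combination -E0 + hS1 - F 0 1 * r0 + (F 0 1 - F 2 1) * hP13
  have eB : P 2 1 * (F 1 1 - F 2 1) = pi 1 := by
    have E2 := hE 2 1; rw [if_neg (by decide)] at E2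
    linear_combination -E2 + hS1 - F 2 1 * r2 + (F 2 1 - F 0 1) * hP31
  have eC : P 0 1 * (F 1 2 - F 0 2) = pi 2 := by
    have E0 := hE 0 2; rw [if_neg (by decide)] at E0
    linear_combination -E0 + hS2 - F 0 2 * r0 + (F 0 2 - F 2 2) * hP13
  have eD : P 2 1 * (F 1 0 - F 2 0) = pi 0 := by
    have E2 := hE 2 0; rw [if_neg (by decide)] at E2
    linear_combination -E2 + hS0 - F 2 0 * r2 + (F 2 0 - F 0 0) * hP31
  -- hitting time equations
  have eh1 : P 0 1 * h 0 1 = 1 := by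
    have hr := hrec 0 1 (by decide)
    simp only [Fin.sum_univ_three, hdiag, hP13] at hr
    linear_combination hr + h 0 1 * r0 - h 0 1 * hP13
  have eh2 : P 2 1 * h 2 1 = 1 := by
    have hr := hrec 2 1 (by decide)
    simp only [Fin.sum_univ_three, hdiag, hP31] at hr
    linear_combination hr + h 2 1 * r2 - h 2 1 * hP31
  rw [hΩ, hΩ, hΩ]
  linear_combination (-(F 1 2 - F 0 2 - F 1 1 + F 0 1)) * eh1
    - (F 1 0 - F 2 0 - F 1 1 + F 2 1) * eh2
    + h 0 1 * eC - h 0 1 * eA + h 2 1 * eD - h 2 1 * eB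
end

section
/- (Failure of the triangle inequality for reversible chains.) Let P be a primitive stochastic matrix on the three-element state space X = {1, 2, 3} which is a birth–death chain: P_{1,3} = P_{3,1} = 0 and P_{1,2}, P_{2,1}, P_{2,3}, P_{3,2} are all strictly positive. Let π be its stationary distribution, F the fundamental matrix, and Ω the resistance distance. If π_1 > π_2 and π_3 > π_2, then Ω_{1,3} > Ω_{1,2} + Ω_{2,3}; in particular the resistance distance Ω need not satisfy the triangle inequality for reversible Markov chains. -/
open Matrix BigOperators Finset

set_option maxHeartbeats 1000000 in
theorem stmt_19
    (P : Matrix (Fin 3) (Fin 3) ℝ)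
    (hP_nonneg : ∀ i j, 0 ≤ P i j)
    (hP_row : ∀ i, ∑ j, P i j = 1)
    (hP_prim : ∃ N : ℕ, 1 ≤ N ∧ ∀ i j, 0 < (P ^ N) i j)
    (hP13 : P 0 2 = 0) (hP31 : P 2 0 = 0)
    (hP12 : 0 < P 0 1) (hP21 : 0 < P 1 0)
    (hP23 : 0 < P 1 2) (hP32 : 0 < P 2 1)
    (pi : Fin 3 → ℝ)
    (hpi_pos : ∀ i, 0 < pi i)
    (hpi_sum : ∑ i, pi i = 1)
    (hpi_stat : ∀ j, ∑ i, pi i * P i j = pi j)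
    (PiM : Matrix (Fin 3) (Fin 3) ℝ)
    (hPiM : ∀ i j, PiM i j = pi j)
    (F : Matrix (Fin 3) (Fin 3) ℝ)
    (hF1 : F * (1 - P + PiM) = 1)
    (hF2 : (1 - P + PiM) * F = 1)
    (Ω : Fin 3 → Fin 3 → ℝ)
    (hΩ : ∀ i j, Ω i j = F i i + F j j - F i j - F j i)
    (h12 : pi 1 < pi 0) (h32 : pi 1 < pi 2)
    : Ω 0 1 + Ω 1 2 < Ω 0 2 := by
  set M : Matrix (Fin 3) (Fin 3) ℝ := 1 - P + PiM with hMdef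
  have hM : ∀ i j, M i j = (if i = j then (1:ℝ) else 0) - P i j + pi j := by
    intro i j
    simp [hMdef, Matrix.sub_apply, Matrix.add_apply, Matrix.one_apply, hPiM]
  -- row sum facts
  have hr0 := hP_row 0
  have hr1 := hP_row 1
  have hr2 := hP_row 2
  rw [Fin.sum_univ_three] at hr0 hr1 hr2
  have hP00 : P 0 0 = 1 - P 0 1 := by linarith [hP13]
  have hP11 : P 1 1 = 1 - P 1 0 - P 1 2 := by linarith
  have hP22 : P 2 2 = 1 - P 2 1 := by linarith [hP31]
  have hsum : pi 0 + pi 1 + pi 2 = 1 := by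
    have := hpi_sum; rwa [Fin.sum_univ_three] at this
  -- stationarity facts
  have hst0 : pi 0 * P 0 1 = pi 1 * P 1 0 := by
    have h := hpi_stat 0
    rw [Fin.sum_univ_three, hP00, hP31] at h
    linear_combination -h
  have hst2 : pi 2 * P 2 1 = pi 1 * P 1 2 := by
    have h := hpi_stat 2
    rw [Fin.sum_univ_three, hP13, hP22] at h
    linear_combination -h
  -- entries of M
  have m00 : M 0 0 = P 0 1 + pi 0 := by rw [hM, if_pos rfl, hP00]; ring
  have m01 : M 0 1 = pi 1 - P 0 1 := by rw [hM, if_neg (by decide)]; ring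
  have m02 : M 0 2 = pi 2 := by rw [hM, if_neg (by decide), hP13]; ring
  have m10 : M 1 0 = pi 0 - P 1 0 := by rw [hM, if_neg (by decide)]; ring
  have m11 : M 1 1 = P 1 0 + P 1 2 + pi 1 := by rw [hM, if_pos rfl, hP11]; ring
  have m12 : M 1 2 = pi 2 - P 1 2 := by rw [hM, if_neg (by decide)]; ring
  have m20 : M 2 0 = pi 0 := by rw [hM, if_neg (by decide), hP31]; ring
  have m21 : M 2 1 = pi 1 - P 2 1 := by rw [hM, if_neg (by decide)]; ring
  have m22 : M 2 2 = P 2 1 + pi 2 := by rw [hM, if_pos rfl, hP22]; ring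
  -- det M • F = adjugate M
  have hadj : M.det • F = M.adjugate := by
    calc M.det • F = F * (M.det • 1) := by rw [Matrix.mul_smul, Matrix.mul_one]
    _ = F * (M * M.adjugate) := by rw [Matrix.mul_adjugate]
    _ = (F * M) * M.adjugate := by rw [Matrix.mul_assoc]
    _ = M.adjugate := by rw [hF1, Matrix.one_mul]
  have hE : ∀ i j, M.det * F i j = M.adjugate i j := by
    intro i j
    have := congrFun (congrFun hadj i) j
    simpa using this
  -- determinant
  have hdet : M.det = P 1 0 * P 2 1 + P 0 1 * P 2 1 + P 0 1 * P 1 2 := by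
    rw [Matrix.det_fin_three, m00, m01, m02, m10, m11, m12, m20, m21, m22]
    linear_combination (P 1 0 * P 2 1 + P 0 1 * P 2 1 + P 0 1 * P 1 2) * hsum
  have hdetpos : 0 < M.det := by
    rw [hdet]
    positivity
  -- key combination
  have key : M.det * (Ω 0 2 - (Ω 0 1 + Ω 1 2)) =
      M.adjugate 0 1 + M.adjugate 1 0 + M.adjugate 1 2 + M.adjugate 2 1
      - M.adjugate 0 2 - M.adjugate 2 0 - 2 * M.adjugate 1 1 := by
    rw [hΩ 0 2, hΩ 0 1, hΩ 1 2]
    linear_combination hE 0 1 + hE 1 0 + hE 1 2 + hE 2 1 - hE 0 2 - hE 2 0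
      - 2 * hE 1 1
  have hadjval : M.adjugate 0 1 + M.adjugate 1 0 + M.adjugate 1 2 + M.adjugate 2 1
      - M.adjugate 0 2 - M.adjugate 2 0 - 2 * M.adjugate 1 1
      = (P 1 0 - P 0 1) + (P 1 2 - P 2 1) := by
    have a01 : M.adjugate 0 1 = -(M 0 1 * M 2 2) + M 0 2 * M 2 1 := by
      rw [Matrix.adjugate_fin_three]; simp
    have a10 : M.adjugate 1 0 = -(M 1 0 * M 2 2) + M 1 2 * M 2 0 := by
      rw [Matrix.adjugate_fin_three]; simp
    have a12 : M.adjugate 1 2 = -(M 0 0 * M 1 2) + M 0 2 * M 1 0 := by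
      rw [Matrix.adjugate_fin_three]; simp
    have a21 : M.adjugate 2 1 = -(M 0 0 * M 2 1) + M 0 1 * M 2 0 := by
      rw [Matrix.adjugate_fin_three]; simp
    have a02 : M.adjugate 0 2 = M 0 1 * M 1 2 - M 0 2 * M 1 1 := by
      rw [Matrix.adjugate_fin_three]; simp
    have a20 : M.adjugate 2 0 = M 1 0 * M 2 1 - M 1 1 * M 2 0 := by
      rw [Matrix.adjugate_fin_three]; simp
    have a11 : M.adjugate 1 1 = M 0 0 * M 2 2 - M 0 2 * M 2 0 := by
      rw [Matrix.adjugate_fin_three]; simp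
    rw [a01, a10, a12, a21, a02, a20, a11,
      m00, m01, m02, m10, m11, m12, m20, m21, m22]
    linear_combination (P 1 0 - P 0 1 + P 1 2 - P 2 1) * hsum
  have h1 : P 0 1 < P 1 0 := by
    nlinarith [hpi_pos 0, hpi_pos 1, hst0, mul_pos hP21 (sub_pos.mpr h12)]
  have h2 : P 2 1 < P 1 2 := by
    nlinarith [hpi_pos 2, hpi_pos 1, hst2, mul_pos hP23 (sub_pos.mpr h32)]
  have hNpos : 0 < (P 1 0 - P 0 1) + (P 1 2 - P 2 1) := by linarith
  have hDS := key.trans hadjval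
  nlinarith [hdetpos, hNpos, hDS]
end
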